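/- arXiv:1804.09034 — 5 statements merged into one kernel-verified Lean document; each statement's English description precedes it below -/
import Mathlib

section
/- Let (A_n)_n be a non-decreasing sequence of subsets of ℝ^d, set A = ⋃_n A_n, and assume d(A_n, A \ A_{n+1}) > 0 for all n, where d(A,B) := inf{|x−y| : x ∈ A, y ∈ B}. Then for every q ∈ ℝ^k and t ∈ ℝ, H^{q,t}_{μ,φ}(A) = lim_{n→∞} H^{q,t}_{μ,φ}(A_n). -/
open MeasureTheory Metric Filter Set Asymptotics
open scoped ENNReal Topology

noncomputable section

/-- Points of `ℝ^d`. -/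
abbrev Pt (d : ℕ) : Type := EuclideanSpace ℝ (Fin d)

variable {d k : ℕ}

/-- `(μ(B(x,r)))^q = ∏_j (μ_j(B(x,r)))^{q_j}`. -/
def ballWeight (μ : Fin k → Measure (Pt d)) (q : Fin k → ℝ) (x : Pt d) (r : ℝ) : ℝ≥0∞ :=
  ∏ j, μ j (closedBall x r) ^ q j

/-- A centered `ε`-covering of `E`: a countable family of closed balls with centers in `E`,
radii in `(0, ε]`, covering `E`. -/
def IsCenteredCover (E : Set (Pt d)) (ε : ℝ) (S : Set (Pt d × ℝ)) : Prop :=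
  S.Countable ∧ (∀ p ∈ S, p.1 ∈ E ∧ 0 < p.2 ∧ p.2 ≤ ε) ∧
    E ⊆ ⋃ p ∈ S, closedBall p.1 p.2

/-- A centered `ε`-packing of `E`: a countable family of pairwise disjoint closed balls
with centers in `E` and radii in `(0, ε]`. -/
def IsCenteredPacking (E : Set (Pt d)) (ε : ℝ) (S : Set (Pt d × ℝ)) : Prop :=
  S.Countable ∧ (∀ p ∈ S, p.1 ∈ E ∧ 0 < p.2 ∧ p.2 ≤ ε) ∧
    S.Pairwise fun p p' => Disjoint (closedBall p.1 p.2) (closedBall p'.1 p'.2)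

/-- `Σ_i (μ(B(x_i,r_i)))^q e^{t φ(r_i)}` over a family of balls. -/
def famSum (μ : Fin k → Measure (Pt d)) (φ : ℝ → ℝ) (q : Fin k → ℝ) (t : ℝ)
    (S : Set (Pt d × ℝ)) : ℝ≥0∞ :=
  ∑' p : S, ballWeight μ q p.1.1 p.1.2 * ENNReal.ofReal (Real.exp (t * φ p.1.2))

/-- `H̄^{q,t}_{μ,φ,ε}`. -/
def preH (μ : Fin k → Measure (Pt d)) (φ : ℝ → ℝ) (q : Fin k → ℝ) (t ε : ℝ)
    (E : Set (Pt d)) : ℝ≥0∞ :=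
  ⨅ (S : Set (Pt d × ℝ)) (_ : IsCenteredCover E ε S), famSum μ φ q t S

/-- `H̄^{q,t}_{μ,φ} = sup_{ε>0} H̄^{q,t}_{μ,φ,ε}`. -/
def mixedHbar (μ : Fin k → Measure (Pt d)) (φ : ℝ → ℝ) (q : Fin k → ℝ) (t : ℝ)
    (E : Set (Pt d)) : ℝ≥0∞ :=
  ⨆ (ε : ℝ) (_ : 0 < ε), preH μ φ q t ε E

/-- The mixed generalized Hausdorff measure `H^{q,t}_{μ,φ}`. -/
def mixedH (μ : Fin k → Measure (Pt d)) (φ : ℝ → ℝ) (q : Fin k → ℝ) (t : ℝ)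
    (E : Set (Pt d)) : ℝ≥0∞ :=
  ⨆ (F : Set (Pt d)) (_ : F ⊆ E), mixedHbar μ φ q t F

/-- `P̄^{q,t}_{μ,φ,ε}`. -/
def preP (μ : Fin k → Measure (Pt d)) (φ : ℝ → ℝ) (q : Fin k → ℝ) (t ε : ℝ)
    (E : Set (Pt d)) : ℝ≥0∞ :=
  ⨆ (S : Set (Pt d × ℝ)) (_ : IsCenteredPacking E ε S), famSum μ φ q t S

/-- `P̄^{q,t}_{μ,φ} = inf_{ε>0} P̄^{q,t}_{μ,φ,ε}`. -/
def mixedPbar (μ : Fin k → Measure (Pt d)) (φ : ℝ → ℝ) (q : Fin k → ℝ) (t : ℝ)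
    (E : Set (Pt d)) : ℝ≥0∞ :=
  ⨅ (ε : ℝ) (_ : 0 < ε), preP μ φ q t ε E

/-- The mixed generalized packing measure `P^{q,t}_{μ,φ}`. -/
def mixedP (μ : Fin k → Measure (Pt d)) (φ : ℝ → ℝ) (q : Fin k → ℝ) (t : ℝ)
    (E : Set (Pt d)) : ℝ≥0∞ :=
  ⨅ (A : ℕ → Set (Pt d)) (_ : E ⊆ ⋃ n, A n), ∑' n, mixedPbar μ φ q t (A n)

/-- The mixed Hausdorff dimension `b_{μ,φ}(q,E)`: the jump point of `t ↦ H^{q,t}_{μ,φ}(E)`. -/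
def bDim (μ : Fin k → Measure (Pt d)) (φ : ℝ → ℝ) (q : Fin k → ℝ) (E : Set (Pt d)) : EReal :=
  sInf (Real.toEReal '' {t : ℝ | mixedH μ φ q t E = 0})

/-- The mixed packing dimension `B_{μ,φ}(q,E)`. -/
def BDim (μ : Fin k → Measure (Pt d)) (φ : ℝ → ℝ) (q : Fin k → ℝ) (E : Set (Pt d)) : EReal :=
  sInf (Real.toEReal '' {t : ℝ | mixedP μ φ q t E = 0})

/-- The mixed logarithmic index `Λ_{μ,φ}(q,E)`. -/
def LDim (μ : Fin k → Measure (Pt d)) (φ : ℝ → ℝ) (q : Fin k → ℝ) (E : Set (Pt d)) : EReal :=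
  sInf (Real.toEReal '' {t : ℝ | mixedPbar μ φ q t E = 0})

/-- Topological support of a Borel measure. -/
def supp1 (ν : Measure (Pt d)) : Set (Pt d) := {x | ∀ r : ℝ, 0 < r → 0 < ν (ball x r)}

/-- `supp(μ) = ⋂_j supp(μ_j)`. -/
def mSupp (μ : Fin k → Measure (Pt d)) : Set (Pt d) := ⋂ j, supp1 (μ j)

/-- `T^q_{μ,δ}(E)`. -/
def covT (μ : Fin k → Measure (Pt d)) (q : Fin k → ℝ) (δ : ℝ) (E : Set (Pt d)) : ℝ≥0∞ :=
  ⨅ (S : Set (Pt d)) (_ : S.Countable ∧ S ⊆ E ∧ E ⊆ ⋃ x ∈ S, closedBall x δ),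
    ∑' x : S, ballWeight μ q x.1 δ

/-- `S^q_{μ,δ}(E)`. -/
def packS (μ : Fin k → Measure (Pt d)) (q : Fin k → ℝ) (δ : ℝ) (E : Set (Pt d)) : ℝ≥0∞ :=
  ⨆ (S : Set (Pt d)) (_ : S.Countable ∧ S ⊆ E ∧
      S.Pairwise fun x y => Disjoint (closedBall x δ) (closedBall y δ)),
    ∑' x : S, ballWeight μ q x.1 δ

/-- `L̄^q_{μ,φ}(E) = limsup_{δ↓0} log T^q_{μ,δ}(E) / (−φ(δ))`. -/
def upperL (μ : Fin k → Measure (Pt d)) (φ : ℝ → ℝ) (q : Fin k → ℝ) (E : Set (Pt d)) : EReal :=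
  limsup (fun δ : ℝ => (((-φ δ)⁻¹ : ℝ) : EReal) * ENNReal.log (covT μ q δ E)) (𝓝[>] 0)

/-- `L̲^q_{μ,φ}(E)`. -/
def lowerL (μ : Fin k → Measure (Pt d)) (φ : ℝ → ℝ) (q : Fin k → ℝ) (E : Set (Pt d)) : EReal :=
  liminf (fun δ : ℝ => (((-φ δ)⁻¹ : ℝ) : EReal) * ENNReal.log (covT μ q δ E)) (𝓝[>] 0)

/-- `C̄^q_{μ,φ}(E)`. -/
def upperC (μ : Fin k → Measure (Pt d)) (φ : ℝ → ℝ) (q : Fin k → ℝ) (E : Set (Pt d)) : EReal :=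
  limsup (fun δ : ℝ => (((-φ δ)⁻¹ : ℝ) : EReal) * ENNReal.log (packS μ q δ E)) (𝓝[>] 0)

/-- `C̲^q_{μ,φ}(E)`. -/
def lowerC (μ : Fin k → Measure (Pt d)) (φ : ℝ → ℝ) (q : Fin k → ℝ) (E : Set (Pt d)) : EReal :=
  liminf (fun δ : ℝ => (((-φ δ)⁻¹ : ℝ) : EReal) * ENNReal.log (packS μ q δ E)) (𝓝[>] 0)

/-- `I^q_{μ,δ} = ∫_{S_μ} ∏_j (μ_j(B(t_j,δ)))^{q_j} dμ_1(t_1)⋯dμ_k(t_k)`. -/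
def intI (μ : Fin k → Measure (Pt d)) (q : Fin k → ℝ) (δ : ℝ) : ℝ≥0∞ :=
  ∫⁻ x in Set.univ.pi (fun j => supp1 (μ j)), ∏ j, μ j (closedBall (x j) δ) ^ q j
    ∂(Measure.pi μ)

/-- `Ī^q_{μ,φ}`. -/
def upperI (μ : Fin k → Measure (Pt d)) (φ : ℝ → ℝ) (q : Fin k → ℝ) : EReal :=
  limsup (fun δ : ℝ => (((-φ δ)⁻¹ : ℝ) : EReal) * ENNReal.log (intI μ q δ)) (𝓝[>] 0)

/-- `I̲^q_{μ,φ}`. -/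
def lowerI (μ : Fin k → Measure (Pt d)) (φ : ℝ → ℝ) (q : Fin k → ℝ) : EReal :=
  liminf (fun δ : ℝ => (((-φ δ)⁻¹ : ℝ) : EReal) * ENNReal.log (intI μ q δ)) (𝓝[>] 0)

/-- `log(ν(B(x,r)))/φ(r)`. -/
def locRatio (ν : Measure (Pt d)) (φ : ℝ → ℝ) (x : Pt d) (r : ℝ) : ℝ :=
  Real.log ((ν (closedBall x r)).toReal) / φ r

/-- `X̄^α(φ)`. -/
def XUpper (μ : Fin k → Measure (Pt d)) (φ : ℝ → ℝ) (α : Fin k → ℝ) : Set (Pt d) :=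
  {x | x ∈ mSupp μ ∧ ∀ j,
    limsup (fun r : ℝ => ((locRatio (μ j) φ x r : ℝ) : EReal)) (𝓝[>] 0) ≤ (α j : EReal)}

/-- `X̲_α(φ)`. -/
def XLower (μ : Fin k → Measure (Pt d)) (φ : ℝ → ℝ) (α : Fin k → ℝ) : Set (Pt d) :=
  {x | x ∈ mSupp μ ∧ ∀ j,
    (α j : EReal) ≤ liminf (fun r : ℝ => ((locRatio (μ j) φ x r : ℝ) : EReal)) (𝓝[>] 0)}

/-- The `s`-dimensional centered Hausdorff measure (the case `q = 0`, `φ = log`). -/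
def cHaus (μ : Fin k → Measure (Pt d)) (s : ℝ) (E : Set (Pt d)) : ℝ≥0∞ :=
  mixedH μ Real.log (fun _ => 0) s E

/-- The `s`-dimensional packing measure (the case `q = 0`, `φ = log`). -/
def cPack (μ : Fin k → Measure (Pt d)) (s : ℝ) (E : Set (Pt d)) : ℝ≥0∞ :=
  mixedP μ Real.log (fun _ => 0) s E

/-- Hausdorff dimension (jump point of `s ↦ cHaus s E`). -/
def hDim (μ : Fin k → Measure (Pt d)) (E : Set (Pt d)) : EReal :=
  bDim μ Real.log (fun _ => 0) E

/-- Packing dimension (jump point of `s ↦ cPack s E`). -/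
def pDim (μ : Fin k → Measure (Pt d)) (E : Set (Pt d)) : EReal :=
  BDim μ Real.log (fun _ => 0) E

set_option maxHeartbeats 1000000

section auxlemmas
-- ==== auxiliary lemmas ====
variable {μ : Fin k → Measure (Pt d)} {φ : ℝ → ℝ} {q : Fin k → ℝ} {t : ℝ}

def wfun (μ : Fin k → Measure (Pt d)) (φ : ℝ → ℝ) (q : Fin k → ℝ) (t : ℝ) :
    Pt d × ℝ → ℝ≥0∞ :=
  fun p => ballWeight μ q p.1 p.2 * ENNReal.ofReal (Real.exp (t * φ p.2))

lemma famSum_eq (S : Set (Pt d × ℝ)) : famSum μ φ q t S = ∑' p : S, wfun μ φ q t p := rfl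

lemma famSum_mono {S1 S2 : Set (Pt d × ℝ)} (h : S1 ⊆ S2) :
    famSum μ φ q t S1 ≤ famSum μ φ q t S2 :=
  ENNReal.tsum_mono_subtype (wfun μ φ q t) h

lemma famSum_iUnion_le (S : ℕ → Set (Pt d × ℝ)) :
    famSum μ φ q t (⋃ i, S i) ≤ ∑' i, famSum μ φ q t (S i) :=
  ENNReal.tsum_iUnion_le_tsum (wfun μ φ q t) S

lemma famSum_disjoint_le {S1 S2 S : Set (Pt d × ℝ)} (hd : Disjoint S1 S2)
    (h1 : S1 ⊆ S) (h2 : S2 ⊆ S) :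
    famSum μ φ q t S1 + famSum μ φ q t S2 ≤ famSum μ φ q t S := by
  rw [famSum_eq, famSum_eq, famSum_eq,
    ← ENNReal.summable.tsum_union_disjoint hd ENNReal.summable]
  exact ENNReal.tsum_mono_subtype _ (union_subset h1 h2)

lemma preH_anti {ε1 ε2 : ℝ} (h : ε1 ≤ ε2) (E : Set (Pt d)) :
    preH μ φ q t ε2 E ≤ preH μ φ q t ε1 E :=
  le_iInf₂ fun S hS => iInf₂_le S
    ⟨hS.1, fun p hp => ⟨(hS.2.1 p hp).1, (hS.2.1 p hp).2.1, (hS.2.1 p hp).2.2.trans h⟩, hS.2.2⟩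

lemma preH_le_mixedHbar {ε : ℝ} (hε : 0 < ε) (E : Set (Pt d)) :
    preH μ φ q t ε E ≤ mixedHbar μ φ q t E :=
  le_iSup₂ (f := fun ε (_ : 0 < ε) => preH μ φ q t ε E) ε hε

lemma mixedHbar_eq_iSup_Ioc {δ : ℝ} (hδ : 0 < δ) (E : Set (Pt d)) :
    mixedHbar μ φ q t E = ⨆ ε : Ioc (0:ℝ) δ, preH μ φ q t ε E := by
  apply le_antisymm
  · refine iSup₂_le fun ε hε => ?_
    exact (preH_anti (min_le_left ε δ) E).trans
      (le_iSup (fun x : Ioc (0:ℝ) δ => preH μ φ q t x E)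
        ⟨min ε δ, lt_min hε hδ, min_le_right _ _⟩)
  · exact iSup_le fun ε => preH_le_mixedHbar ε.2.1 E

lemma mixedHbar_super {E1 E2 : Set (Pt d)} {c : ℝ≥0∞} (hc : 0 < c)
    (hsep : ∀ x ∈ E1, ∀ y ∈ E2, c ≤ edist x y) :
    mixedHbar μ φ q t E1 + mixedHbar μ φ q t E2 ≤ mixedHbar μ φ q t (E1 ∪ E2) := by
  obtain ⟨δ, hδ0, hδc⟩ : ∃ δ : ℝ, 0 < δ ∧ ENNReal.ofReal δ < c := by
    rcases eq_or_ne c ⊤ with rfl | hct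
    · exact ⟨1, one_pos, ENNReal.ofReal_lt_top⟩
    · have h0 : 0 < c.toReal := ENNReal.toReal_pos hc.ne' hct
      refine ⟨c.toReal / 2, half_pos h0, ?_⟩
      rw [ENNReal.ofReal_lt_iff_lt_toReal (by positivity) hct]
      linarith
  have key : ∀ ε : Ioc (0:ℝ) δ,
      preH μ φ q t ε E1 + preH μ φ q t ε E2 ≤ preH μ φ q t ε (E1 ∪ E2) := by
    rintro ⟨ε, hε0, hεδ⟩
    refine le_iInf₂ fun S hS => ?_
    set S1 : Set (Pt d × ℝ) := {p ∈ S | p.1 ∈ E1} with hS1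
    set S2 : Set (Pt d × ℝ) := {p ∈ S | p.1 ∈ E2} with hS2
    have hdisj : Disjoint S1 S2 := by
      rw [Set.disjoint_left]
      rintro p ⟨hpS, hp1⟩ ⟨-, hp2⟩
      have h0 : c ≤ 0 := by simpa [edist_self] using hsep _ hp1 _ hp2
      exact absurd (le_antisymm h0 (zero_le)) hc.ne'
    have hball : ∀ p ∈ S, ∀ y : Pt d, y ∈ closedBall p.1 p.2 → edist y p.1 < c := by
      intro p hp y hy
      rw [edist_dist]
      refine lt_of_le_of_lt ?_ hδc
      exact ENNReal.ofReal_le_ofReal ((mem_closedBall.1 hy).trans ((hS.2.1 p hp).2.2.trans hεδ))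
    have hcov1 : IsCenteredCover E1 ε S1 := by
      refine ⟨hS.1.mono (sep_subset _ _), fun p hp => ⟨hp.2, (hS.2.1 p hp.1).2⟩,
        fun y hy => ?_⟩
      obtain ⟨p, hpS, hyp⟩ := mem_iUnion₂.1 (hS.2.2 (mem_union_left _ hy))
      rcases (hS.2.1 p hpS).1 with h1 | h2
      · exact mem_iUnion₂.2 ⟨p, ⟨hpS, h1⟩, hyp⟩
      · exact absurd (hsep y hy p.1 h2) (not_le.2 (hball p hpS y hyp))
    have hcov2 : IsCenteredCover E2 ε S2 := by
      refine ⟨hS.1.mono (sep_subset _ _), fun p hp => ⟨hp.2, (hS.2.1 p hp.1).2⟩,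
        fun y hy => ?_⟩
      obtain ⟨p, hpS, hyp⟩ := mem_iUnion₂.1 (hS.2.2 (mem_union_right _ hy))
      rcases (hS.2.1 p hpS).1 with h1 | h2
      · refine absurd (hsep p.1 h1 y hy) (not_le.2 ?_)
        rw [edist_comm]
        exact hball p hpS y hyp
      · exact mem_iUnion₂.2 ⟨p, ⟨hpS, h2⟩, hyp⟩
    calc preH μ φ q t ε E1 + preH μ φ q t ε E2
        ≤ famSum μ φ q t S1 + famSum μ φ q t S2 :=
          add_le_add (iInf₂_le S1 hcov1) (iInf₂_le S2 hcov2)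
      _ ≤ famSum μ φ q t S := famSum_disjoint_le hdisj (sep_subset _ _) (sep_subset _ _)
  haveI : Nonempty (Ioc (0:ℝ) δ) := ⟨⟨δ, hδ0, le_rfl⟩⟩
  rw [mixedHbar_eq_iSup_Ioc hδ0 E1, mixedHbar_eq_iSup_Ioc hδ0 E2,
    mixedHbar_eq_iSup_Ioc hδ0 (E1 ∪ E2),
    ENNReal.iSup_add_iSup (fun i j => ⟨⟨min i.1 j.1, lt_min i.2.1 j.2.1,
      (min_le_left _ _).trans i.2.2⟩,
      add_le_add (preH_anti (min_le_left _ _) _) (preH_anti (min_le_right _ _) _)⟩)]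
  exact iSup_le fun ε => (key ε).trans
    (le_iSup (fun x : Ioc (0:ℝ) δ => preH μ φ q t x (E1 ∪ E2)) ε)
lemma preH_subadd (ε : ℝ) (G : ℕ → Set (Pt d)) :
    preH μ φ q t ε (⋃ i, G i) ≤ ∑' i, preH μ φ q t ε (G i) := by
  set R := ∑' i, preH μ φ q t ε (G i) with hR
  rcases eq_or_ne R ⊤ with hRt | hRt
  · exact hRt ▸ le_top
  refine ENNReal.le_of_forall_pos_le_add fun η hη _ => ?_
  obtain ⟨η', hη'pos, hη'sum⟩ :=
    ENNReal.exists_pos_sum_of_countable' (ε := (η : ℝ≥0∞)) (by exact_mod_cast hη.ne') ℕ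
  have hchoice : ∀ i, ∃ S : Set (Pt d × ℝ), IsCenteredCover (G i) ε S ∧
      famSum μ φ q t S ≤ preH μ φ q t ε (G i) + η' i := by
    intro i
    have hfin : preH μ φ q t ε (G i) ≠ ⊤ :=
      fun h => hRt (top_unique (h ▸ ENNReal.le_tsum i))
    have hlt : preH μ φ q t ε (G i) < preH μ φ q t ε (G i) + η' i :=
      ENNReal.lt_add_right hfin (hη'pos i).ne'
    obtain ⟨S, hS⟩ := iInf_lt_iff.1 hlt
    obtain ⟨hcov, hfs⟩ := iInf_lt_iff.1 hS
    exact ⟨S, hcov, hfs.le⟩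
  choose S hScov hSle using hchoice
  have hcovU : IsCenteredCover (⋃ i, G i) ε (⋃ i, S i) := by
    refine ⟨countable_iUnion fun i => (hScov i).1, ?_, ?_⟩
    · intro p hp
      obtain ⟨i, hpi⟩ := mem_iUnion.1 hp
      exact ⟨mem_iUnion.2 ⟨i, ((hScov i).2.1 p hpi).1⟩, ((hScov i).2.1 p hpi).2⟩
    · intro x hx
      obtain ⟨i, hxi⟩ := mem_iUnion.1 hx
      obtain ⟨p, hpS, hxp⟩ := mem_iUnion₂.1 ((hScov i).2.2 hxi)
      exact mem_iUnion₂.2 ⟨p, mem_iUnion.2 ⟨i, hpS⟩, hxp⟩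
  calc preH μ φ q t ε (⋃ i, G i) ≤ famSum μ φ q t (⋃ i, S i) := iInf₂_le _ hcovU
    _ ≤ ∑' i, famSum μ φ q t (S i) := famSum_iUnion_le S
    _ ≤ ∑' i, (preH μ φ q t ε (G i) + η' i) := ENNReal.tsum_le_tsum hSle
    _ = R + ∑' i, η' i := ENNReal.tsum_add
    _ ≤ R + η := add_le_add_right hη'sum.le R

lemma mixedHbar_subadd (G : ℕ → Set (Pt d)) :
    mixedHbar μ φ q t (⋃ i, G i) ≤ ∑' i, mixedHbar μ φ q t (G i) :=
  iSup₂_le fun ε hε => (preH_subadd ε G).trans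
    (ENNReal.tsum_le_tsum fun i => preH_le_mixedHbar hε (G i))

lemma mixedHbar_le_mixedH {F E : Set (Pt d)} (h : F ⊆ E) :
    mixedHbar μ φ q t F ≤ mixedH μ φ q t E :=
  le_iSup₂ (f := fun F (_ : F ⊆ E) => mixedHbar μ φ q t F) F h

lemma mixedH_mono {E E' : Set (Pt d)} (h : E ⊆ E') :
    mixedH μ φ q t E ≤ mixedH μ φ q t E' :=
  iSup₂_le fun F hF => mixedHbar_le_mixedH (hF.trans h)

lemma sum_le_mixedHbar_biUnion (C : ℕ → Set (Pt d))
    (hs : ∀ N, ∃ c : ℝ≥0∞, 0 < c ∧ ∀ x ∈ ⋃ i, ⋃ (_ : i < N), C i, ∀ y ∈ C N, c ≤ edist x y) :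
    ∀ N, ∑ i ∈ Finset.range N, mixedHbar μ φ q t (C i) ≤ mixedHbar μ φ q t (⋃ i < N, C i) := by
  intro N
  induction N with
  | zero => simp
  | succ N ih =>
    obtain ⟨c, hc, hcs⟩ := hs N
    rw [Finset.sum_range_succ, Set.biUnion_lt_succ]
    exact (add_le_add ih le_rfl).trans (mixedHbar_super hc hcs)
end auxlemmas

/-- continuity of `H^{q,t}_{μ,φ}` along increasing sequences that are
metrically separated from the complement of the next term. -/
theorem stmt_1 (d k : ℕ) (hd : 1 ≤ d) (hk : 1 ≤ k)
    (μ : Fin k → Measure (Pt d)) (hμ : ∀ j, IsProbabilityMeasure (μ j))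
    (φ : ℝ → ℝ) (hφmono : MonotoneOn φ (Ioi (0 : ℝ)))
    (hφneg : ∃ r₀ > (0 : ℝ), ∀ r : ℝ, 0 < r → r < r₀ → φ r < 0)
    (q : Fin k → ℝ) (t : ℝ)
    (A : ℕ → Set (Pt d)) (hmono : Monotone A)
    (hsep : ∀ n, (0 : ℝ≥0∞) < ⨅ x ∈ A n, ⨅ y ∈ (⋃ m, A m) \ A (n + 1), edist x y) :
    Tendsto (fun n => mixedH μ φ q t (A n)) atTop (𝓝 (mixedH μ φ q t (⋃ n, A n))) := by
  classical
  have hmonoH : Monotone fun n => mixedH μ φ q t (A n) :=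
    fun m n h => mixedH_mono (hmono h)
  have hle : mixedH μ φ q t (⋃ n, A n) = ⨆ n, mixedH μ φ q t (A n) := by
    refine le_antisymm ?_ (iSup_le fun n => mixedH_mono (subset_iUnion A n))
    refine iSup₂_le fun F hF => ?_
    set L := ⨆ n, mixedH μ φ q t (A n) with hLdef
    set Fn : ℕ → Set (Pt d) := fun n => F ∩ A n with hFndef
    set Bs : ℕ → Set (Pt d) := fun n => Fn n \ ⋃ m < n, Fn m with hBsdef
    have hFnmono : Monotone Fn := fun a b h => inter_subset_inter_right F (hmono h)
    have hBsF : ∀ n, Bs n ⊆ F := fun n x hx => hx.1.1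
    have hBsA : ∀ n, Bs n ⊆ A n := fun n x hx => hx.1.2
    have hBsnot : ∀ n m, m < n → ∀ x ∈ Bs n, x ∉ A m := by
      intro n m hmn x hx hxA
      exact hx.2 (mem_iUnion₂.2 ⟨m, hmn, hx.1.1, hxA⟩)
    have hsplit : ∀ x ∈ F, ∀ N : ℕ, x ∈ Fn N ∨ ∃ n, N < n ∧ x ∈ Bs n := by
      intro x hx N
      have hex : ∃ n, x ∈ Fn n := by
        obtain ⟨m, hm⟩ := mem_iUnion.1 (hF hx)
        exact ⟨m, hx, hm⟩
      rcases le_or_gt (Nat.find hex) N with h | h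
      · exact Or.inl (hFnmono h (Nat.find_spec hex))
      · refine Or.inr ⟨Nat.find hex, h, Nat.find_spec hex, ?_⟩
        intro hmem
        obtain ⟨m, hmlt, hmF⟩ := mem_iUnion₂.1 hmem
        exact Nat.find_min hex hmlt hmF
    have hsepB : ∀ n m : ℕ, n + 2 ≤ m → ∀ x ∈ A n, ∀ y ∈ Bs m,
        (⨅ x ∈ A n, ⨅ y ∈ (⋃ m, A m) \ A (n + 1), edist x y) ≤ edist x y := by
      intro n m hnm x hx y hy
      have hyD : y ∈ (⋃ m, A m) \ A (n + 1) :=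
        ⟨hF (hBsF m hy), hBsnot m (n + 1) (by omega) y hy⟩
      exact le_trans (iInf₂_le x hx)
        (iInf₂_le (f := fun y (_ : y ∈ (⋃ m, A m) \ A (n + 1)) => edist x y) y hyD)
    set g : ℕ → ℝ≥0∞ := fun n => mixedHbar μ φ q t (Bs n) with hgdef
    have hparts : ∀ p : ℕ, ∀ N : ℕ,
        ∑ i ∈ Finset.range N, g (2 * i + p) ≤ L := by
      intro p N
      have hsC : ∀ M : ℕ, ∃ c : ℝ≥0∞, 0 < c ∧
          ∀ x ∈ ⋃ i, ⋃ (_ : i < M), Bs (2 * i + p), ∀ y ∈ Bs (2 * M + p),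
            c ≤ edist x y := by
        intro M
        rcases M with _ | M'
        · refine ⟨1, one_pos, fun x hx => ?_⟩
          simp at hx
        · refine ⟨_, hsep (2 * M' + p), fun x hx y hy => ?_⟩
          obtain ⟨i, hi, hxB⟩ := mem_iUnion₂.1 hx
          exact hsepB (2 * M' + p) (2 * (M' + 1) + p) (by omega) x
            (hmono (by omega) (hBsA _ hxB)) y hy
      calc ∑ i ∈ Finset.range N, g (2 * i + p)
          ≤ mixedHbar μ φ q t (⋃ i < N, Bs (2 * i + p)) :=
            sum_le_mixedHbar_biUnion (fun i => Bs (2 * i + p)) hsC N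
        _ ≤ mixedH μ φ q t (A (2 * N + p)) := mixedHbar_le_mixedH
            (iUnion₂_subset fun i hi => (hBsA _).trans (hmono (by omega)))
        _ ≤ L := le_iSup (fun n => mixedH μ φ q t (A n)) (2 * N + p)
    have htsum_le : ∀ p : ℕ, (∑' i, g (2 * i + p)) ≤ L := by
      intro p
      rw [ENNReal.tsum_eq_iSup_nat]
      exact iSup_le (hparts p)
    rcases eq_or_ne (∑' n, g n) ⊤ with hT | hT
    · have htop : (⊤ : ℝ≥0∞) ≤ L := by
        rw [← tsum_even_add_odd (f := g) ENNReal.summable ENNReal.summable] at hT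
        rcases ENNReal.add_eq_top.1 hT with h | h
        · calc (⊤ : ℝ≥0∞) = ∑' i, g (2 * i) := h.symm
            _ = ∑' i, g (2 * i + 0) := by simp
            _ ≤ L := htsum_le 0
        · calc (⊤ : ℝ≥0∞) = ∑' i, g (2 * i + 1) := h.symm
            _ ≤ L := htsum_le 1
      exact le_top.trans htop
    · have htail : Tendsto (fun N : ℕ => ∑' j, g (j + N)) atTop (𝓝 0) :=
        ENNReal.tendsto_sum_nat_add g hT
      have hbound : ∀ N : ℕ, mixedHbar μ φ q t F ≤ L + ∑' j, g (j + (N + 1)) := by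
        intro N
        set G : ℕ → Set (Pt d) :=
          fun i => Nat.casesOn i (Fn N) (fun j => Bs (j + (N + 1))) with hGdef
        have hGU : (⋃ i, G i) = F := by
          apply Subset.antisymm
          · refine iUnion_subset fun i => ?_
            cases i with
            | zero => exact inter_subset_left
            | succ j => exact hBsF _
          · intro x hx
            rcases hsplit x hx N with h | ⟨n, hn, hB⟩
            · exact mem_iUnion.2 ⟨0, h⟩
            · refine mem_iUnion.2 ⟨(n - (N + 1)) + 1, ?_⟩
              show x ∈ Bs ((n - (N + 1)) + (N + 1))
              rwa [Nat.sub_add_cancel (by omega)]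
        calc mixedHbar μ φ q t F = mixedHbar μ φ q t (⋃ i, G i) := by rw [hGU]
          _ ≤ ∑' i, mixedHbar μ φ q t (G i) := mixedHbar_subadd G
          _ = mixedHbar μ φ q t (Fn N) + ∑' j, g (j + (N + 1)) := by
              rw [tsum_eq_zero_add' ENNReal.summable]
              rfl
          _ ≤ L + ∑' j, g (j + (N + 1)) := by
              refine add_le_add ?_ le_rfl
              exact (mixedHbar_le_mixedH inter_subset_right).trans
                (le_iSup (fun n => mixedH μ φ q t (A n)) N)
      have h1 : Tendsto (fun N : ℕ => ∑' j, g (j + (N + 1))) atTop (𝓝 0) :=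
        htail.comp (tendsto_add_atTop_nat 1)
      have h2 : Tendsto (fun N : ℕ => L + ∑' j, g (j + (N + 1))) atTop (𝓝 L) := by
        simpa using h1.const_add L
      exact ge_of_tendsto' h2 hbound
  rw [hle]
  exact tendsto_atTop_iSup hmonoH


end
end

section
/- There exists a constant ξ ∈ (0,+∞), depending only on the dimension d (the constant of the Besicovitch covering theorem in ℝ^d), such that for every set E ⊆ ℝ^d, every q ∈ ℝ^k and every t ∈ ℝ: H^{q,t}_{μ,φ}(E) ≤ ξ · P^{q,t}_{μ,φ}(E) ≤ ξ · P̄^{q,t}_{μ,φ}(E). -/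
set_option maxHeartbeats 2000000


open MeasureTheory Metric Filter Set Asymptotics
open scoped ENNReal Topology

noncomputable section

variable {d k : ℕ}

namespace Stmt8Aux

variable {d k : ℕ} (μ : Fin k → Measure (Pt d)) (φ : ℝ → ℝ) (q : Fin k → ℝ) (t : ℝ)

lemma le_mul_iInf {ι : Sort*} {a : ℝ≥0∞} (ha0 : a ≠ 0) (hat : a ≠ ⊤)
    {f : ι → ℝ≥0∞} {c : ℝ≥0∞} (h : ∀ i, c ≤ a * f i) :
    c ≤ a * ⨅ i, f i := by
  rw [ENNReal.mul_iInf_of_ne ha0 hat]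
  exact le_iInf h

lemma famSum_mono {S S' : Set (Pt d × ℝ)} (h : S ⊆ S') :
    famSum μ φ q t S ≤ famSum μ φ q t S' :=
  ENNReal.tsum_mono_subtype
    (fun p : Pt d × ℝ => ballWeight μ q p.1 p.2 * ENNReal.ofReal (Real.exp (t * φ p.2))) h

lemma isCenteredPacking_mono {F F' : Set (Pt d)} (h : F ⊆ F') {ε : ℝ} {S : Set (Pt d × ℝ)}
    (hS : IsCenteredPacking F ε S) : IsCenteredPacking F' ε S :=
  ⟨hS.1, fun p hp => ⟨h (hS.2.1 p hp).1, (hS.2.1 p hp).2⟩, hS.2.2⟩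

lemma famSum_le_preP {F : Set (Pt d)} {ε : ℝ} {S : Set (Pt d × ℝ)}
    (hS : IsCenteredPacking F ε S) : famSum μ φ q t S ≤ preP μ φ q t ε F :=
  le_iSup_of_le S (le_iSup (fun _ : IsCenteredPacking F ε S => famSum μ φ q t S) hS)

lemma preP_le {F : Set (Pt d)} {ε : ℝ} {c : ℝ≥0∞}
    (h : ∀ S, IsCenteredPacking F ε S → famSum μ φ q t S ≤ c) : preP μ φ q t ε F ≤ c :=
  iSup_le fun S => iSup_le fun hS => h S hS

lemma preH_le_famSum {F : Set (Pt d)} {ε : ℝ} {S : Set (Pt d × ℝ)}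
    (hS : IsCenteredCover F ε S) : preH μ φ q t ε F ≤ famSum μ φ q t S :=
  iInf_le_of_le S (iInf_le (fun _ : IsCenteredCover F ε S => famSum μ φ q t S) hS)

lemma preP_mono_set {F F' : Set (Pt d)} (h : F ⊆ F') (ε : ℝ) :
    preP μ φ q t ε F ≤ preP μ φ q t ε F' :=
  preP_le μ φ q t fun S hS => famSum_le_preP μ φ q t (isCenteredPacking_mono h hS)

lemma preP_mono_eps {ε ε' : ℝ} (h : ε ≤ ε') (F : Set (Pt d)) :
    preP μ φ q t ε F ≤ preP μ φ q t ε' F :=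
  preP_le μ φ q t fun S hS => famSum_le_preP μ φ q t
    ⟨hS.1, fun p hp => ⟨(hS.2.1 p hp).1, (hS.2.1 p hp).2.1, (hS.2.1 p hp).2.2.trans h⟩, hS.2.2⟩

lemma mixedPbar_mono {F F' : Set (Pt d)} (h : F ⊆ F') :
    mixedPbar μ φ q t F ≤ mixedPbar μ φ q t F' :=
  iInf_mono fun ε => iInf_mono' fun hε => ⟨hε, preP_mono_set μ φ q t h ε⟩

lemma preH_anti {ε ε' : ℝ} (h : ε ≤ ε') (F : Set (Pt d)) :
    preH μ φ q t ε' F ≤ preH μ φ q t ε F := by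
  refine le_iInf fun S => le_iInf fun hS => ?_
  exact preH_le_famSum μ φ q t
    ⟨hS.1, fun p hp => ⟨(hS.2.1 p hp).1, (hS.2.1 p hp).2.1, (hS.2.1 p hp).2.2.trans h⟩, hS.2.2⟩

lemma mixedPbar_empty : mixedPbar μ φ q t (∅ : Set (Pt d)) = 0 := by
  refine le_antisymm ?_ zero_le
  refine (iInf_le_of_le (1 : ℝ) (iInf_le _ one_pos)).trans ?_
  refine preP_le μ φ q t fun S hS => ?_
  have hSe : S = ∅ := by
    ext p
    simp only [Set.mem_empty_iff_false, iff_false]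
    intro hp
    exact (hS.2.1 p hp).1
  subst hSe
  exact le_of_eq tsum_empty

/-- Key lemma: Besicovitch gives `preH ≤ N · preP` at the same scale. -/
lemma preH_le_preP {N : ℕ} {τ : ℝ} (hτ : 1 < τ)
    (hN : IsEmpty (Besicovitch.SatelliteConfig (Pt d) N τ)) {δ : ℝ} (hδ : 0 < δ)
    (F : Set (Pt d)) :
    preH μ φ q t δ F ≤ N * preP μ φ q t δ F := by
  rcases F.eq_empty_or_nonempty with rfl | hF
  · have hcov : IsCenteredCover (∅ : Set (Pt d)) δ (∅ : Set (Pt d × ℝ)) :=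
      ⟨countable_empty, by simp, by simp⟩
    calc preH μ φ q t δ (∅ : Set (Pt d))
        ≤ famSum μ φ q t ∅ := preH_le_famSum μ φ q t hcov
      _ = 0 := tsum_empty
      _ ≤ _ := zero_le
  · have : Nonempty F := hF.to_subtype
    let pkg : Besicovitch.BallPackage F (Pt d) :=
      { c := fun x => (x : Pt d), r := fun _ => δ, rpos := fun _ => hδ, r_bound := δ,
        r_le := fun _ => le_rfl }
    obtain ⟨s, hdisj, hcov⟩ := Besicovitch.exist_disjoint_covering_families hτ hN pkg
    set T : Fin N → Set (Pt d) := fun i => Subtype.val '' s i with hT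
    have hTF : ∀ i, T i ⊆ F := fun i x hx => by
      obtain ⟨y, _, rfl⟩ := hx; exact y.2
    have hTdisj : ∀ i, (T i).Pairwise fun x y => Disjoint (closedBall x δ) (closedBall y δ) := by
      intro i x hx y hy hxy
      obtain ⟨x', hx', rfl⟩ := hx
      obtain ⟨y', hy', rfl⟩ := hy
      exact hdisj i hx' hy' (fun h => hxy (congrArg Subtype.val h))
    have hTcount : ∀ i, (T i).Countable := by
      intro i
      refine Set.PairwiseDisjoint.countable_of_isOpen (s := fun x => ball x δ)
        (fun x hx y hy hxy => ?_) (fun x _ => isOpen_ball) (fun x _ => ?_)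
      · exact (hTdisj i hx hy hxy).mono ball_subset_closedBall ball_subset_closedBall
      · exact (nonempty_ball).2 hδ
    set Sf : Fin N → Set (Pt d × ℝ) := fun i => (fun x => (x, δ)) '' T i with hSf
    have hSfcount : ∀ i, (Sf i).Countable := fun i => (hTcount i).image _
    have hSfpack : ∀ i, IsCenteredPacking F δ (Sf i) := by
      intro i
      refine ⟨hSfcount i, ?_, ?_⟩
      · rintro p ⟨x, hx, rfl⟩
        exact ⟨hTF i hx, hδ, le_rfl⟩
      · rintro p ⟨x, hx, rfl⟩ p' ⟨y, hy, rfl⟩ hne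
        exact hTdisj i hx hy (fun h => hne (by simp [h]))
    have hScover : IsCenteredCover F δ (⋃ i, Sf i) := by
      refine ⟨countable_iUnion hSfcount, ?_, ?_⟩
      · rintro p hp
        obtain ⟨i, hpi⟩ := Set.mem_iUnion.1 hp
        obtain ⟨x, hx, rfl⟩ := hpi
        exact ⟨hTF i hx, hδ, le_rfl⟩
      · intro x hxF
        have hmem : x ∈ Set.range pkg.c := ⟨⟨x, hxF⟩, rfl⟩
        obtain ⟨i, j, hj, hxball⟩ := by
          have h2 := hcov hmem
          simpa only [Set.mem_iUnion] using h2
        have hjS : ((j : Pt d), δ) ∈ ⋃ i, Sf i :=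
          Set.mem_iUnion.2 ⟨i, ⟨(j : Pt d), ⟨j, hj, rfl⟩, rfl⟩⟩
        exact Set.mem_biUnion hjS (ball_subset_closedBall hxball)
    calc preH μ φ q t δ F
        ≤ famSum μ φ q t (⋃ i, Sf i) := preH_le_famSum μ φ q t hScover
      _ ≤ ∑ i : Fin N, famSum μ φ q t (Sf i) :=
          ENNReal.tsum_iUnion_le
            (fun p : Pt d × ℝ =>
              ballWeight μ q p.1 p.2 * ENNReal.ofReal (Real.exp (t * φ p.2))) Sf
      _ ≤ ∑ _i : Fin N, preP μ φ q t δ F :=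
          Finset.sum_le_sum fun i _ => famSum_le_preP μ φ q t (hSfpack i)
      _ = N * preP μ φ q t δ F := by
          simp [Finset.sum_const, nsmul_eq_mul]

lemma mixedHbar_le_mixedPbar {N : ℕ} {τ : ℝ} (hτ : 1 < τ)
    (hN : IsEmpty (Besicovitch.SatelliteConfig (Pt d) N τ)) (F : Set (Pt d)) :
    mixedHbar μ φ q t F ≤ (max N 1 : ℕ) * mixedPbar μ φ q t F := by
  have hM0 : ((max N 1 : ℕ) : ℝ≥0∞) ≠ 0 := Nat.cast_ne_zero.2 (by omega)
  have hMtop : ((max N 1 : ℕ) : ℝ≥0∞) ≠ ⊤ := ENNReal.natCast_ne_top _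
  refine iSup_le fun ε => iSup_le fun hε => ?_
  refine le_mul_iInf hM0 hMtop fun ε' => ?_
  refine le_mul_iInf hM0 hMtop fun hε' => ?_
  have hδ : 0 < min ε ε' := lt_min hε hε'
  calc preH μ φ q t ε F ≤ preH μ φ q t (min ε ε') F := preH_anti μ φ q t (min_le_left _ _) F
    _ ≤ N * preP μ φ q t (min ε ε') F := preH_le_preP μ φ q t hτ hN hδ F
    _ ≤ (max N 1 : ℕ) * preP μ φ q t ε' F := by
        refine mul_le_mul' (by exact_mod_cast Nat.cast_le.2 (le_max_left N 1)) ?_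
        exact preP_mono_eps μ φ q t (min_le_right _ _) F

lemma exists_centeredCover (B : Set (Pt d)) {ε : ℝ} (hε : 0 < ε) :
    ∃ S, IsCenteredCover B ε S := by
  obtain ⟨u, hu_count, hu_dense⟩ := TopologicalSpace.exists_countable_dense (↥B)
  refine ⟨(fun y => ((y : Pt d), ε)) '' (Subtype.val '' u), ((hu_count.image _).image _),
    ?_, ?_⟩
  · rintro p ⟨x, ⟨y, _, rfl⟩, rfl⟩
    exact ⟨y.2, hε, le_rfl⟩
  · intro x hx
    have hxc : (⟨x, hx⟩ : ↥B) ∈ closure u := hu_dense _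
    obtain ⟨y, hyu, hdist⟩ := Metric.mem_closure_iff.1 hxc ε hε
    refine Set.mem_biUnion (show ((y : Pt d), ε) ∈ _ from ⟨(y : Pt d), ⟨y, hyu, rfl⟩, rfl⟩) ?_
    rw [mem_closedBall]
    rw [Subtype.dist_eq] at hdist
    exact le_of_lt (by simpa [dist_comm] using hdist)

lemma preH_subadd {ε : ℝ} (hε : 0 < ε) (F : Set (Pt d)) (A : ℕ → Set (Pt d))
    (hFA : F ⊆ ⋃ n, A n) :
    preH μ φ q t ε F ≤ ∑' n, preH μ φ q t ε (F ∩ A n) := by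
  refine ENNReal.le_of_forall_pos_le_add fun η hη hlt => ?_
  obtain ⟨δ, hδpos, hδsum⟩ := ENNReal.exists_pos_sum_of_countable
    (ε := (η : ℝ≥0∞)) (by exact_mod_cast hη.ne') ℕ
  have hchoice : ∀ n : ℕ, ∃ S, IsCenteredCover (F ∩ A n) ε S ∧
      famSum μ φ q t S ≤ preH μ φ q t ε (F ∩ A n) + δ n := by
    intro n
    have hfin : preH μ φ q t ε (F ∩ A n) < ⊤ :=
      lt_of_le_of_lt (ENNReal.le_tsum n) hlt
    have hlt2 : preH μ φ q t ε (F ∩ A n) < preH μ φ q t ε (F ∩ A n) + δ n :=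
      ENNReal.lt_add_right hfin.ne (by exact_mod_cast (hδpos n).ne')
    obtain ⟨S, hS⟩ := iInf_lt_iff.mp hlt2
    obtain ⟨hSc, hSlt⟩ := iInf_lt_iff.mp hS
    exact ⟨S, hSc, hSlt.le⟩
  choose Sn hSn hSle using hchoice
  have hScover : IsCenteredCover F ε (⋃ n, Sn n) := by
    refine ⟨countable_iUnion fun n => (hSn n).1, ?_, ?_⟩
    · intro p hp
      obtain ⟨n, hpn⟩ := Set.mem_iUnion.1 hp
      exact ⟨((hSn n).2.1 p hpn).1.1, ((hSn n).2.1 p hpn).2⟩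
    · intro x hxF
      obtain ⟨n, hxn⟩ := Set.mem_iUnion.1 (hFA hxF)
      obtain ⟨p, hpS, hxp⟩ := by
        have h3 := (hSn n).2.2 ⟨hxF, hxn⟩
        simpa only [Set.mem_iUnion₂] using h3
      exact Set.mem_biUnion (Set.mem_iUnion.2 ⟨n, hpS⟩) hxp
  calc preH μ φ q t ε F
      ≤ famSum μ φ q t (⋃ n, Sn n) := preH_le_famSum μ φ q t hScover
    _ ≤ ∑' n, famSum μ φ q t (Sn n) :=
        ENNReal.tsum_iUnion_le_tsum
          (fun p : Pt d × ℝ =>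
            ballWeight μ q p.1 p.2 * ENNReal.ofReal (Real.exp (t * φ p.2))) Sn
    _ ≤ ∑' n, (preH μ φ q t ε (F ∩ A n) + δ n) := ENNReal.tsum_le_tsum hSle
    _ = (∑' n, preH μ φ q t ε (F ∩ A n)) + ∑' n, (δ n : ℝ≥0∞) := ENNReal.tsum_add
    _ ≤ (∑' n, preH μ φ q t ε (F ∩ A n)) + η := add_le_add le_rfl hδsum.le

lemma mixedHbar_subadd (F : Set (Pt d)) (A : ℕ → Set (Pt d)) (hFA : F ⊆ ⋃ n, A n) :
    mixedHbar μ φ q t F ≤ ∑' n, mixedHbar μ φ q t (F ∩ A n) := by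
  refine iSup_le fun ε => iSup_le fun hε => ?_
  refine (preH_subadd μ φ q t hε F A hFA).trans (ENNReal.tsum_le_tsum fun n => ?_)
  exact le_iSup_of_le ε (le_iSup (fun _ : 0 < ε => preH μ φ q t ε (F ∩ A n)) hε)

end Stmt8Aux

/-- the Besicovitch constant `ξ` of `ℝ^d` satisfies
`H^{q,t}_{μ,φ} ≤ ξ P^{q,t}_{μ,φ} ≤ ξ P̄^{q,t}_{μ,φ}`. -/
theorem stmt_8 (d : ℕ) (hd : 1 ≤ d) :
    ∃ ξ : ℝ≥0∞, 0 < ξ ∧ ξ ≠ ⊤ ∧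
      ∀ (k : ℕ), 1 ≤ k →
        ∀ (μ : Fin k → Measure (Pt d)), (∀ j, IsProbabilityMeasure (μ j)) →
          ∀ (φ : ℝ → ℝ), MonotoneOn φ (Ioi (0 : ℝ)) →
            (∃ r₀ > (0 : ℝ), ∀ r : ℝ, 0 < r → r < r₀ → φ r < 0) →
            ∀ (q : Fin k → ℝ) (t : ℝ) (E : Set (Pt d)),
              mixedH μ φ q t E ≤ ξ * mixedP μ φ q t E ∧
              ξ * mixedP μ φ q t E ≤ ξ * mixedPbar μ φ q t E := by
  classical
  obtain ⟨N, τ, hτ, hN⟩ := HasBesicovitchCovering.no_satelliteConfig (α := Pt d)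
  set M : ℕ := max N 1 with hM
  have hM0 : ((M : ℕ) : ℝ≥0∞) ≠ 0 := Nat.cast_ne_zero.2 (by omega)
  have hMtop : ((M : ℕ) : ℝ≥0∞) ≠ ⊤ := ENNReal.natCast_ne_top _
  refine ⟨(M : ℝ≥0∞), pos_iff_ne_zero.2 hM0, hMtop, ?_⟩
  intro k hk μ hμ φ hφmono hφneg q t E
  constructor
  · -- `H ≤ M · P`
    refine iSup_le fun F => iSup_le fun hFE => ?_
    refine Stmt8Aux.le_mul_iInf hM0 hMtop fun A => ?_
    refine Stmt8Aux.le_mul_iInf hM0 hMtop fun hEA => ?_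
    calc mixedHbar μ φ q t F
        ≤ ∑' n, mixedHbar μ φ q t (F ∩ A n) :=
          Stmt8Aux.mixedHbar_subadd μ φ q t F A (hFE.trans hEA)
      _ ≤ ∑' n, (M : ℝ≥0∞) * mixedPbar μ φ q t (F ∩ A n) := by
          refine ENNReal.tsum_le_tsum fun n => ?_
          exact Stmt8Aux.mixedHbar_le_mixedPbar μ φ q t hτ hN (F ∩ A n)
      _ ≤ ∑' n, (M : ℝ≥0∞) * mixedPbar μ φ q t (A n) := by
          refine ENNReal.tsum_le_tsum fun n => ?_
          exact mul_le_mul_right (Stmt8Aux.mixedPbar_mono μ φ q t Set.inter_subset_right) _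
      _ = (M : ℝ≥0∞) * ∑' n, mixedPbar μ φ q t (A n) := ENNReal.tsum_mul_left
  · -- `P ≤ P̄`
    refine mul_le_mul_right ?_ _
    have key : ∀ (A : ℕ → Set (Pt d)), E ⊆ ⋃ n, A n →
        mixedP μ φ q t E ≤ ∑' n, mixedPbar μ φ q t (A n) := fun A hEA =>
      iInf_le_of_le A (iInf_le (fun _ : E ⊆ ⋃ n, A n => ∑' n, mixedPbar μ φ q t (A n)) hEA)
    have hEA : E ⊆ ⋃ n, (fun n => if n = 0 then E else ∅ : ℕ → Set (Pt d)) n := fun x hx =>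
      Set.mem_iUnion.2 ⟨0, by simp [hx]⟩
    refine (key _ hEA).trans (le_of_eq ?_)
    rw [tsum_eq_single 0]
    · simp
    · intro n hn
      simp [hn, Stmt8Aux.mixedPbar_empty]

end
end

section
/- Assume in addition that φ(r) = o(log r) as r → 0. Then: (1) for every δ > 0, t ∈ ℝ, q ∈ ℝ^k with all coordinates ≥ 0 and α ∈ ℝ^k with ⟨α,q⟩ + t ≥ 0, there exists a constant C = C(α,q,k,δ) > 0 such that H^{⟨α,q⟩+t+kδ}(X̄^α(φ)) ≤ C · H^{q,t}_{μ,φ}(X̄^α(φ)) and P^{⟨α,q⟩+t+kδ}(X̄^α(φ)) ≤ C · P^{q,t}_{μ,φ}(X̄^α(φ)); (2) for every δ > 0, t ∈ ℝ, q ∈ ℝ^k with all coordinates ≤ 0 and α ∈ ℝ^k with ⟨α,q⟩ + t ≥ 0, there exists a constant C = C(α,q,k,δ) > 0 such that H^{⟨α,q⟩+t+kδ}(X̲_α(φ)) ≤ C · H^{q,t}_{μ,φ}(X̲_α(φ)) and P^{⟨α,q⟩+t+kδ}(X̲_α(φ)) ≤ C · P^{q,t}_{μ,φ}(X̲_α(φ)).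 -/
open MeasureTheory Metric Filter Set Asymptotics
open scoped ENNReal Topology

noncomputable section

variable {d k : ℕ}

section AuxStmt15

private lemma famSum_haus (μ : Fin k → Measure (Pt d)) (s : ℝ) (S : Set (Pt d × ℝ)) :
    famSum μ Real.log (fun _ => 0) s S
      = ∑' p : S, ENNReal.ofReal (Real.exp (s * Real.log (p : Pt d × ℝ).2)) := by
  refine tsum_congr fun p => ?_
  simp [ballWeight]

private lemma eq_zero_of_forall_le_ofReal {a : ℝ≥0∞}
    (h : ∀ η : ℝ, 0 < η → a ≤ ENNReal.ofReal η) : a = 0 := by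
  refine le_antisymm ?_ (zero_le)
  refine ENNReal.le_of_forall_pos_le_add fun ε hε _ => ?_
  rw [zero_add]
  simpa using h ε (by exact_mod_cast hε)

private lemma keyH (μ : Fin k → Measure (Pt d)) (φ : ℝ → ℝ) (q : Fin k → ℝ) (t s κ : ℝ)
    (hκ : 0 < κ) (X : Set (Pt d)) (Xm : ℕ → Set (Pt d)) (hcov : X ⊆ ⋃ m, Xm m)
    (hineq : ∀ m, ∀ x ∈ Xm m, ∀ r : ℝ, 0 < r → r ≤ ((m : ℝ) + 1)⁻¹ →
      ENNReal.ofReal (Real.exp (s * Real.log r)) ≤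
        ENNReal.ofReal (r ^ κ) * (ballWeight μ q x r * ENNReal.ofReal (Real.exp (t * φ r))))
    (hfin : mixedH μ φ q t X ≠ ⊤) :
    mixedH μ Real.log (fun _ => 0) s X = 0 := by
  refine le_antisymm ?_ (zero_le)
  rw [mixedH]
  refine iSup₂_le fun F hF => le_of_eq (eq_zero_of_forall_le_ofReal fun η hη => ?_)
  rw [mixedHbar]
  refine iSup₂_le fun ε hε => ?_
  set M' := (mixedH μ φ q t X).toReal with hM'
  have hM'0 : 0 ≤ M' := ENNReal.toReal_nonneg
  set c : ℕ → ℝ := fun m => min (min ε (((m : ℝ) + 1)⁻¹))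
      ((η * (2⁻¹ : ℝ) ^ (m + 1) / (M' + 1)) ^ (κ⁻¹ : ℝ)) with hcdef
  have hcpos : ∀ m, 0 < c m := by
    intro m
    refine lt_min (lt_min hε (by positivity)) ?_
    positivity
  have hckappa : ∀ m, (c m) ^ κ ≤ η * (2⁻¹ : ℝ) ^ (m + 1) / (M' + 1) := by
    intro m
    have h1 : c m ≤ (η * (2⁻¹ : ℝ) ^ (m + 1) / (M' + 1)) ^ (κ⁻¹ : ℝ) := min_le_right _ _
    have h2 : (c m) ^ κ ≤ ((η * (2⁻¹ : ℝ) ^ (m + 1) / (M' + 1)) ^ (κ⁻¹ : ℝ)) ^ κ :=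
      Real.rpow_le_rpow (hcpos m).le h1 hκ.le
    rwa [Real.rpow_inv_rpow (by positivity) hκ.ne'] at h2
  have hchoice : ∀ m : ℕ, ∃ S : Set (Pt d × ℝ),
      IsCenteredCover (F ∩ Xm m) (c m) S ∧ famSum μ φ q t S ≤ mixedH μ φ q t X + 1 := by
    intro m
    have h1 : preH μ φ q t (c m) (F ∩ Xm m) ≤ mixedH μ φ q t X := by
      refine le_trans ?_ (le_iSup₂ (f := fun (F' : Set (Pt d)) (_ : F' ⊆ X) =>
        mixedHbar μ φ q t F') (F ∩ Xm m) ((inter_subset_left).trans hF))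
      exact le_iSup₂ (f := fun (ε' : ℝ) (_ : 0 < ε') => preH μ φ q t ε' (F ∩ Xm m)) (c m) (hcpos m)
    have h2 : preH μ φ q t (c m) (F ∩ Xm m) < mixedH μ φ q t X + 1 :=
      h1.trans_lt (ENNReal.lt_add_right hfin one_ne_zero)
    rw [preH] at h2
    obtain ⟨S, hS⟩ := iInf_lt_iff.mp h2
    obtain ⟨hSc, hSle⟩ := iInf_lt_iff.mp hS
    exact ⟨S, hSc, hSle.le⟩
  choose S hScov hSsum using hchoice
  have hcover : IsCenteredCover F ε (⋃ m, S m) := by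
    refine ⟨countable_iUnion fun m => (hScov m).1, ?_, ?_⟩
    · intro p hp
      obtain ⟨m, hm⟩ := mem_iUnion.mp hp
      obtain ⟨h1, h2, h3⟩ := (hScov m).2.1 p hm
      exact ⟨h1.1, h2, h3.trans ((min_le_left _ _).trans (min_le_left _ _))⟩
    · intro x hx
      obtain ⟨m, hmem⟩ := mem_iUnion.mp (hcov (hF hx))
      obtain ⟨Bs, hBs, hxB⟩ := mem_iUnion₂.mp ((hScov m).2.2 ⟨hx, hmem⟩)
      exact mem_iUnion₂.mpr ⟨Bs, mem_iUnion.mpr ⟨m, hBs⟩, hxB⟩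
  have hm : ∀ m : ℕ, (∑' p : S m, ENNReal.ofReal (Real.exp (s * Real.log (p : Pt d × ℝ).2)))
      ≤ ENNReal.ofReal η * (2⁻¹ : ℝ≥0∞) ^ (m + 1) := by
    intro m
    have hstep : ∀ p : S m, ENNReal.ofReal (Real.exp (s * Real.log (p : Pt d × ℝ).2)) ≤
        ENNReal.ofReal ((c m) ^ κ) *
          (ballWeight μ q (p : Pt d × ℝ).1 (p : Pt d × ℝ).2 *
            ENNReal.ofReal (Real.exp (t * φ (p : Pt d × ℝ).2))) := by
      intro p
      obtain ⟨hmem, hrpos, hrle⟩ := (hScov m).2.1 p.1 p.2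
      refine (hineq m _ hmem.2 _ hrpos
        (hrle.trans ((min_le_left _ _).trans (min_le_right _ _)))).trans ?_
      exact mul_le_mul_left (ENNReal.ofReal_le_ofReal
        (Real.rpow_le_rpow hrpos.le hrle hκ.le)) _
    calc (∑' p : S m, ENNReal.ofReal (Real.exp (s * Real.log (p : Pt d × ℝ).2)))
        ≤ ∑' p : S m, ENNReal.ofReal ((c m) ^ κ) *
            (ballWeight μ q (p : Pt d × ℝ).1 (p : Pt d × ℝ).2 *
              ENNReal.ofReal (Real.exp (t * φ (p : Pt d × ℝ).2))) :=
          ENNReal.tsum_le_tsum hstep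
      _ = ENNReal.ofReal ((c m) ^ κ) * famSum μ φ q t (S m) := by
          rw [famSum, ENNReal.tsum_mul_left]
      _ ≤ ENNReal.ofReal ((c m) ^ κ) * (mixedH μ φ q t X + 1) :=
          mul_le_mul_right (hSsum m) _
      _ ≤ ENNReal.ofReal (η * (2⁻¹ : ℝ) ^ (m + 1) / (M' + 1)) * (mixedH μ φ q t X + 1) :=
          mul_le_mul_left (ENNReal.ofReal_le_ofReal (hckappa m)) _
      _ = ENNReal.ofReal η * (2⁻¹ : ℝ≥0∞) ^ (m + 1) := by
          rw [show mixedH μ φ q t X + 1 = ENNReal.ofReal (M' + 1) by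
            rw [ENNReal.ofReal_add hM'0 zero_le_one, ENNReal.ofReal_one, hM',
              ENNReal.ofReal_toReal hfin]]
          rw [← ENNReal.ofReal_mul (by positivity),
            div_mul_cancel₀ _ (by positivity : (M' : ℝ) + 1 ≠ 0),
            ENNReal.ofReal_mul hη.le, ENNReal.ofReal_pow (by norm_num)]
          congr 2
          rw [ENNReal.ofReal_inv_of_pos two_pos, ENNReal.ofReal_ofNat]
  refine le_trans (iInf₂_le (⋃ m, S m) hcover) ?_
  rw [famSum_haus]
  refine le_trans (ENNReal.tsum_iUnion_le_tsum
    (fun p : Pt d × ℝ => ENNReal.ofReal (Real.exp (s * Real.log p.2))) S) ?_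
  calc (∑' m, ∑' p : S m, ENNReal.ofReal (Real.exp (s * Real.log (p : Pt d × ℝ).2)))
      ≤ ∑' m : ℕ, ENNReal.ofReal η * (2⁻¹ : ℝ≥0∞) ^ (m + 1) := ENNReal.tsum_le_tsum hm
    _ = ENNReal.ofReal η * (2⁻¹ * (1 - 2⁻¹)⁻¹) := by
        rw [ENNReal.tsum_mul_left, ENNReal.tsum_geometric_add_one]
    _ = ENNReal.ofReal η := by
        rw [ENNReal.one_sub_inv_two, ENNReal.mul_inv_cancel (by norm_num) (by norm_num), mul_one]

end AuxStmt15
section AuxStmt15b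

private lemma keyP (μ : Fin k → Measure (Pt d)) (φ : ℝ → ℝ) (q : Fin k → ℝ) (t s κ : ℝ)
    (hκ : 0 < κ) (X : Set (Pt d)) (Xm : ℕ → Set (Pt d)) (hcov : X ⊆ ⋃ m, Xm m)
    (hineq : ∀ m, ∀ x ∈ Xm m, ∀ r : ℝ, 0 < r → r ≤ ((m : ℝ) + 1)⁻¹ →
      ENNReal.ofReal (Real.exp (s * Real.log r)) ≤
        ENNReal.ofReal (r ^ κ) * (ballWeight μ q x r * ENNReal.ofReal (Real.exp (t * φ r))))
    (hfin : mixedP μ φ q t X ≠ ⊤) :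
    mixedP μ Real.log (fun _ => 0) s X = 0 := by
  have h1 : mixedP μ φ q t X < ⊤ := hfin.lt_top
  rw [mixedP] at h1
  obtain ⟨A, hA⟩ := iInf_lt_iff.mp h1
  obtain ⟨hAcov, hAsum⟩ := iInf_lt_iff.mp hA
  have hAn : ∀ n, mixedPbar μ φ q t (A n) ≠ ⊤ :=
    fun n => ne_top_of_le_ne_top hAsum.ne (ENNReal.le_tsum n)
  have hzero : ∀ n m, mixedPbar μ Real.log (fun _ => 0) s (A n ∩ Xm m) = 0 := by
    intro n m
    have h2 : mixedPbar μ φ q t (A n) < ⊤ := (hAn n).lt_top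
    rw [mixedPbar] at h2
    obtain ⟨ε₁, hε₁⟩ := iInf_lt_iff.mp h2
    obtain ⟨hε₁pos, hMn⟩ := iInf_lt_iff.mp hε₁
    set Mn' := (preP μ φ q t ε₁ (A n)).toReal with hMn'
    have hMn'0 : 0 ≤ Mn' := ENNReal.toReal_nonneg
    refine eq_zero_of_forall_le_ofReal fun η hη => ?_
    set ε := min (min ε₁ (((m : ℝ) + 1)⁻¹)) ((η / (Mn' + 1)) ^ (κ⁻¹ : ℝ)) with hεdef
    have hεpos : 0 < ε := by
      refine lt_min (lt_min hε₁pos (by positivity)) ?_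
      positivity
    have hεκ : ε ^ κ ≤ η / (Mn' + 1) := by
      have h3 : ε ^ κ ≤ ((η / (Mn' + 1)) ^ (κ⁻¹ : ℝ)) ^ κ :=
        Real.rpow_le_rpow hεpos.le (min_le_right _ _) hκ.le
      rwa [Real.rpow_inv_rpow (by positivity) hκ.ne'] at h3
    rw [mixedPbar]
    refine le_trans (iInf₂_le ε hεpos) ?_
    rw [preP]
    refine iSup₂_le fun S hS => ?_
    have hS' : IsCenteredPacking (A n) ε₁ S :=
      ⟨hS.1, fun p hp => ⟨(hS.2.1 p hp).1.1, (hS.2.1 p hp).2.1,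
        (hS.2.1 p hp).2.2.trans ((min_le_left _ _).trans (min_le_left _ _))⟩, hS.2.2⟩
    have hfS : famSum μ φ q t S ≤ preP μ φ q t ε₁ (A n) :=
      le_iSup₂ (f := fun S (_ : IsCenteredPacking (A n) ε₁ S) => famSum μ φ q t S) S hS'
    have hstep : ∀ p : S, ENNReal.ofReal (Real.exp (s * Real.log (p : Pt d × ℝ).2)) ≤
        ENNReal.ofReal (ε ^ κ) *
          (ballWeight μ q (p : Pt d × ℝ).1 (p : Pt d × ℝ).2 *
            ENNReal.ofReal (Real.exp (t * φ (p : Pt d × ℝ).2))) := by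
      intro p
      obtain ⟨hmem, hrpos, hrle⟩ := hS.2.1 p.1 p.2
      refine (hineq m _ hmem.2 _ hrpos
        (hrle.trans ((min_le_left _ _).trans (min_le_right _ _)))).trans ?_
      exact mul_le_mul_left (ENNReal.ofReal_le_ofReal
        (Real.rpow_le_rpow hrpos.le hrle hκ.le)) _
    rw [famSum_haus]
    calc (∑' p : S, ENNReal.ofReal (Real.exp (s * Real.log (p : Pt d × ℝ).2)))
        ≤ ∑' p : S, ENNReal.ofReal (ε ^ κ) *
            (ballWeight μ q (p : Pt d × ℝ).1 (p : Pt d × ℝ).2 *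
              ENNReal.ofReal (Real.exp (t * φ (p : Pt d × ℝ).2))) :=
          ENNReal.tsum_le_tsum hstep
      _ = ENNReal.ofReal (ε ^ κ) * famSum μ φ q t S := by
          rw [famSum, ENNReal.tsum_mul_left]
      _ ≤ ENNReal.ofReal (η / (Mn' + 1)) * ENNReal.ofReal (Mn' + 1) := by
          refine mul_le_mul' (ENNReal.ofReal_le_ofReal hεκ) (hfS.trans ?_)
          rw [hMn']
          refine le_trans (le_of_eq (ENNReal.ofReal_toReal hMn.ne).symm) ?_
          exact ENNReal.ofReal_le_ofReal (by linarith)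
      _ = ENNReal.ofReal η := by
          rw [← ENNReal.ofReal_mul (by positivity),
            div_mul_cancel₀ _ (by positivity : (Mn' : ℝ) + 1 ≠ 0)]
  refine le_antisymm ?_ (zero_le)
  rw [mixedP]
  set e := (Denumerable.eqv (ℕ × ℕ)).symm with hedef
  refine le_trans (iInf₂_le (fun i => A (e i).1 ∩ Xm (e i).2) ?_) ?_
  · intro x hx
    obtain ⟨n, hn⟩ := mem_iUnion.mp (hAcov hx)
    obtain ⟨m, hm⟩ := mem_iUnion.mp (hcov hx)
    refine mem_iUnion.mpr ⟨e.symm (n, m), ?_⟩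
    rw [hedef]
    simp only [Equiv.symm_symm, Equiv.symm_apply_apply]
    exact ⟨hn, hm⟩
  · simp [hzero]

end AuxStmt15b
section AuxStmt15c

private lemma core_ev (μ : Fin k → Measure (Pt d)) (φ : ℝ → ℝ)
    (hφneg : ∃ r₀ > (0 : ℝ), ∀ r : ℝ, 0 < r → r < r₀ → φ r < 0)
    (hφo : (fun r : ℝ => φ r) =o[𝓝[>] (0 : ℝ)] Real.log)
    (q : Fin k → ℝ) (t K a b : ℝ) (hK : 0 < K) (hb0 : 0 ≤ b) (hble : b ≤ a + K / 4)
    (x : Pt d)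
    (hev : ∀ᶠ r in 𝓝[>] (0 : ℝ), ENNReal.ofReal (Real.exp (b * φ r)) ≤
      ballWeight μ q x r * ENNReal.ofReal (Real.exp (t * φ r))) :
    ∀ᶠ r in 𝓝[>] (0 : ℝ),
      ENNReal.ofReal (Real.exp ((a + K) * Real.log r)) ≤
        ENNReal.ofReal (r ^ (3 * K / 4)) *
          (ballWeight μ q x r * ENNReal.ofReal (Real.exp (t * φ r))) := by
  obtain ⟨r₀, hr₀, hneg0⟩ := hφneg
  have hneg_ev : ∀ᶠ r in 𝓝[>] (0 : ℝ), φ r < 0 := by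
    filter_upwards [eventually_mem_nhdsWithin,
      (gt_mem_nhds hr₀).filter_mono nhdsWithin_le_nhds] with r h1 h2
    exact hneg0 r h1 h2
  have hlt1 : ∀ᶠ r in 𝓝[>] (0 : ℝ), r < 1 :=
    (gt_mem_nhds one_pos).filter_mono nhdsWithin_le_nhds
  have ho : ∀ᶠ r in 𝓝[>] (0 : ℝ), ‖φ r‖ ≤ 1 * ‖Real.log r‖ := hφo.def one_pos
  filter_upwards [hev, eventually_mem_nhdsWithin, hneg_ev, hlt1, ho]
    with r hev' hr hφ' hr1 ho'
  have hr0 : (0 : ℝ) < r := hr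
  have hlog : Real.log r < 0 := Real.log_neg hr0 hr1
  have hφlog : Real.log r ≤ φ r := by
    rw [one_mul, Real.norm_eq_abs, Real.norm_eq_abs, abs_of_neg hφ', abs_of_neg hlog] at ho'
    linarith
  have hkey : (a + K) * Real.log r ≤ 3 * K / 4 * Real.log r + b * φ r := by
    have h1 : b * Real.log r ≤ b * φ r := mul_le_mul_of_nonneg_left hφlog hb0
    have h2 : (a + K / 4) * Real.log r ≤ b * Real.log r :=
      mul_le_mul_of_nonpos_right hble hlog.le
    nlinarith
  calc ENNReal.ofReal (Real.exp ((a + K) * Real.log r))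
      ≤ ENNReal.ofReal (Real.exp (3 * K / 4 * Real.log r + b * φ r)) :=
        ENNReal.ofReal_le_ofReal (Real.exp_le_exp.2 hkey)
    _ = ENNReal.ofReal (r ^ (3 * K / 4)) * ENNReal.ofReal (Real.exp (b * φ r)) := by
        rw [Real.exp_add, ENNReal.ofReal_mul (Real.exp_nonneg _)]
        congr 2
        rw [Real.rpow_def_of_pos hr0]
        ring_nf
    _ ≤ ENNReal.ofReal (r ^ (3 * K / 4)) *
          (ballWeight μ q x r * ENNReal.ofReal (Real.exp (t * φ r))) :=
        mul_le_mul_right hev' _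

end AuxStmt15c
section AuxStmt15d

private lemma hpt_upper (μ : Fin k → Measure (Pt d)) (hμ : ∀ j, IsProbabilityMeasure (μ j))
    (φ : ℝ → ℝ)
    (hφneg : ∃ r₀ > (0 : ℝ), ∀ r : ℝ, 0 < r → r < r₀ → φ r < 0)
    (hφo : (fun r : ℝ => φ r) =o[𝓝[>] (0 : ℝ)] Real.log)
    (q : Fin k → ℝ) (hq : ∀ i, 0 ≤ q i) (α : Fin k → ℝ) (t K : ℝ) (hK : 0 < K)
    (hA : 0 ≤ (∑ j, α j * q j) + t)
    (x : Pt d) (hx : x ∈ XUpper μ φ α) :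
    ∀ᶠ r in 𝓝[>] (0 : ℝ),
      ENNReal.ofReal (Real.exp (((∑ j, α j * q j) + t + K) * Real.log r)) ≤
        ENNReal.ofReal (r ^ (3 * K / 4)) *
          (ballWeight μ q x r * ENNReal.ofReal (Real.exp (t * φ r))) := by
  set Q := ∑ j, q j with hQdef
  have hQ0 : 0 ≤ Q := Finset.sum_nonneg fun j _ => hq j
  set δ' := K / (4 * (Q + 1)) with hδ'def
  have hδ'pos : 0 < δ' := by positivity
  have hδ'Q : δ' * Q ≤ K / 4 := by
    rw [hδ'def, div_mul_eq_mul_div, div_le_div_iff₀ (by positivity) (by norm_num)]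
    nlinarith
  set b := (∑ j, (α j + δ') * q j) + t with hbdef
  have hb_eq : b = ((∑ j, α j * q j) + t) + δ' * Q := by
    have hsum : ∑ j, (α j + δ') * q j = (∑ j, α j * q j) + δ' * ∑ j, q j := by
      rw [Finset.mul_sum, ← Finset.sum_add_distrib]
      exact Finset.sum_congr rfl fun j _ => by ring
    rw [hbdef, hQdef, hsum]
    ring
  have hb0 : 0 ≤ b := by rw [hb_eq]; positivity
  have hble : b ≤ ((∑ j, α j * q j) + t) + K / 4 := by rw [hb_eq]; linarith
  have hneg_ev : ∀ᶠ r in 𝓝[>] (0 : ℝ), φ r < 0 := by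
    obtain ⟨r₀, hr₀, hneg0⟩ := hφneg
    filter_upwards [eventually_mem_nhdsWithin,
      (gt_mem_nhds hr₀).filter_mono nhdsWithin_le_nhds] with r h1 h2
    exact hneg0 r h1 h2
  have hall : ∀ᶠ r in 𝓝[>] (0 : ℝ), ∀ j, locRatio (μ j) φ x r < α j + δ' := by
    rw [eventually_all]
    intro j
    have hlim := hx.2 j
    have hcoe : (α j : EReal) < ((α j + δ' : ℝ) : EReal) := by
      exact_mod_cast lt_add_of_pos_right (α j) hδ'pos
    filter_upwards [eventually_lt_of_limsup_lt (lt_of_le_of_lt hlim hcoe)] with r hr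
    exact_mod_cast hr
  have hev : ∀ᶠ r in 𝓝[>] (0 : ℝ), ENNReal.ofReal (Real.exp (b * φ r)) ≤
      ballWeight μ q x r * ENNReal.ofReal (Real.exp (t * φ r)) := by
    filter_upwards [hall, hneg_ev, eventually_mem_nhdsWithin] with r hall' hφ' hr
    have hr0 : (0 : ℝ) < r := hr
    have hsupp : ∀ j, 0 < μ j (closedBall x r) := by
      intro j
      have hx1 := hx.1
      rw [mSupp, mem_iInter] at hx1
      exact lt_of_lt_of_le (hx1 j r hr0) (measure_mono ball_subset_closedBall)
    have hwj : ∀ j, ENNReal.ofReal (Real.exp ((α j + δ') * q j * φ r)) ≤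
        μ j (closedBall x r) ^ q j := by
      intro j
      have hne : μ j (closedBall x r) ≠ ⊤ := by
        have := hμ j; exact measure_ne_top _ _
      have htR : 0 < (μ j (closedBall x r)).toReal :=
        ENNReal.toReal_pos (hsupp j).ne' hne
      have h1 : (α j + δ') * φ r < Real.log ((μ j (closedBall x r)).toReal) := by
        have h2 := hall' j
        rw [locRatio] at h2
        exact (div_lt_iff_of_neg hφ').mp h2
      have h3 : ENNReal.ofReal (Real.exp ((α j + δ') * φ r)) ≤ μ j (closedBall x r) := by
        refine le_of_lt ((ENNReal.ofReal_lt_iff_lt_toReal (Real.exp_nonneg _) hne).mpr ?_)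
        calc Real.exp ((α j + δ') * φ r)
            < Real.exp (Real.log ((μ j (closedBall x r)).toReal)) := Real.exp_lt_exp.2 h1
          _ = (μ j (closedBall x r)).toReal := Real.exp_log htR
      have heq : (α j + δ') * q j * φ r = (α j + δ') * φ r * q j := by ring
      rw [heq, Real.exp_mul, ← ENNReal.ofReal_rpow_of_pos (Real.exp_pos _)]
      exact ENNReal.rpow_le_rpow h3 (hq j)
    have hsplit : ENNReal.ofReal (Real.exp (b * φ r)) =
        (∏ j, ENNReal.ofReal (Real.exp ((α j + δ') * q j * φ r))) *
          ENNReal.ofReal (Real.exp (t * φ r)) := by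
      rw [← ENNReal.ofReal_prod_of_nonneg (fun j _ => Real.exp_nonneg _), ← Real.exp_sum,
        ← ENNReal.ofReal_mul (by positivity), ← Real.exp_add]
      congr 2
      rw [hbdef, add_mul, Finset.sum_mul]
    rw [hsplit, ballWeight]
    exact mul_le_mul_left (Finset.prod_le_prod' fun j _ => hwj j) _
  exact core_ev μ φ hφneg hφo q t K ((∑ j, α j * q j) + t) b hK hb0 hble x hev

private lemma hpt_lower (μ : Fin k → Measure (Pt d)) (hμ : ∀ j, IsProbabilityMeasure (μ j))
    (φ : ℝ → ℝ)
    (hφneg : ∃ r₀ > (0 : ℝ), ∀ r : ℝ, 0 < r → r < r₀ → φ r < 0)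
    (hφo : (fun r : ℝ => φ r) =o[𝓝[>] (0 : ℝ)] Real.log)
    (q : Fin k → ℝ) (hq : ∀ i, q i ≤ 0) (α : Fin k → ℝ) (t K : ℝ) (hK : 0 < K)
    (hA : 0 ≤ (∑ j, α j * q j) + t)
    (x : Pt d) (hx : x ∈ XLower μ φ α) :
    ∀ᶠ r in 𝓝[>] (0 : ℝ),
      ENNReal.ofReal (Real.exp (((∑ j, α j * q j) + t + K) * Real.log r)) ≤
        ENNReal.ofReal (r ^ (3 * K / 4)) *
          (ballWeight μ q x r * ENNReal.ofReal (Real.exp (t * φ r))) := by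
  set Q := -∑ j, q j with hQdef
  have hQ0 : 0 ≤ Q := by
    rw [hQdef, neg_nonneg]
    exact Finset.sum_nonpos fun j _ => hq j
  set δ' := K / (4 * (Q + 1)) with hδ'def
  have hδ'pos : 0 < δ' := by positivity
  have hδ'Q : δ' * Q ≤ K / 4 := by
    rw [hδ'def, div_mul_eq_mul_div, div_le_div_iff₀ (by positivity) (by norm_num)]
    nlinarith
  set b := (∑ j, (α j - δ') * q j) + t with hbdef
  have hb_eq : b = ((∑ j, α j * q j) + t) + δ' * Q := by
    have hsum : ∑ j, (α j - δ') * q j = (∑ j, α j * q j) - δ' * ∑ j, q j := by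
      rw [Finset.mul_sum, ← Finset.sum_sub_distrib]
      exact Finset.sum_congr rfl fun j _ => by ring
    rw [hbdef, hQdef, hsum]
    ring
  have hb0 : 0 ≤ b := by rw [hb_eq]; positivity
  have hble : b ≤ ((∑ j, α j * q j) + t) + K / 4 := by rw [hb_eq]; linarith
  have hneg_ev : ∀ᶠ r in 𝓝[>] (0 : ℝ), φ r < 0 := by
    obtain ⟨r₀, hr₀, hneg0⟩ := hφneg
    filter_upwards [eventually_mem_nhdsWithin,
      (gt_mem_nhds hr₀).filter_mono nhdsWithin_le_nhds] with r h1 h2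
    exact hneg0 r h1 h2
  have hall : ∀ᶠ r in 𝓝[>] (0 : ℝ), ∀ j, α j - δ' < locRatio (μ j) φ x r := by
    rw [eventually_all]
    intro j
    have hlim := hx.2 j
    have hcoe : (((α j - δ' : ℝ) : EReal)) < (α j : EReal) := by
      exact_mod_cast sub_lt_self (α j) hδ'pos
    filter_upwards [eventually_lt_of_lt_liminf (lt_of_lt_of_le hcoe hlim)] with r hr
    exact_mod_cast hr
  have hev : ∀ᶠ r in 𝓝[>] (0 : ℝ), ENNReal.ofReal (Real.exp (b * φ r)) ≤
      ballWeight μ q x r * ENNReal.ofReal (Real.exp (t * φ r)) := by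
    filter_upwards [hall, hneg_ev, eventually_mem_nhdsWithin] with r hall' hφ' hr
    have hr0 : (0 : ℝ) < r := hr
    have hsupp : ∀ j, 0 < μ j (closedBall x r) := by
      intro j
      have hx1 := hx.1
      rw [mSupp, mem_iInter] at hx1
      exact lt_of_lt_of_le (hx1 j r hr0) (measure_mono ball_subset_closedBall)
    have hwj : ∀ j, ENNReal.ofReal (Real.exp ((α j - δ') * q j * φ r)) ≤
        μ j (closedBall x r) ^ q j := by
      intro j
      have hne : μ j (closedBall x r) ≠ ⊤ := by
        have := hμ j; exact measure_ne_top _ _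
      have htR : 0 < (μ j (closedBall x r)).toReal :=
        ENNReal.toReal_pos (hsupp j).ne' hne
      have h1 : Real.log ((μ j (closedBall x r)).toReal) < (α j - δ') * φ r := by
        have h2 := hall' j
        rw [locRatio] at h2
        have := (lt_div_iff_of_neg hφ').mp h2
        linarith
      have h3 : μ j (closedBall x r) ≤ ENNReal.ofReal (Real.exp ((α j - δ') * φ r)) := by
        refine (ENNReal.le_ofReal_iff_toReal_le hne (Real.exp_nonneg _)).mpr (le_of_lt ?_)
        calc (μ j (closedBall x r)).toReal
            = Real.exp (Real.log ((μ j (closedBall x r)).toReal)) := (Real.exp_log htR).symm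
          _ < Real.exp ((α j - δ') * φ r) := Real.exp_lt_exp.2 h1
      have h5 : ENNReal.ofReal (Real.exp ((α j - δ') * φ r)) ^ q j ≤
          μ j (closedBall x r) ^ q j := by
        have h4 := ENNReal.inv_le_inv.2 (ENNReal.rpow_le_rpow h3 (neg_nonneg.2 (hq j)))
        rwa [← ENNReal.rpow_neg, ← ENNReal.rpow_neg, neg_neg] at h4
      have heq : (α j - δ') * q j * φ r = (α j - δ') * φ r * q j := by ring
      rw [heq, Real.exp_mul, ← ENNReal.ofReal_rpow_of_pos (Real.exp_pos _)]
      exact h5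
    have hsplit : ENNReal.ofReal (Real.exp (b * φ r)) =
        (∏ j, ENNReal.ofReal (Real.exp ((α j - δ') * q j * φ r))) *
          ENNReal.ofReal (Real.exp (t * φ r)) := by
      rw [← ENNReal.ofReal_prod_of_nonneg (fun j _ => Real.exp_nonneg _), ← Real.exp_sum,
        ← ENNReal.ofReal_mul (by positivity), ← Real.exp_add]
      congr 2
      rw [hbdef, add_mul, Finset.sum_mul]
    rw [hsplit, ballWeight]
    exact mul_le_mul_left (Finset.prod_le_prod' fun j _ => hwj j) _
  exact core_ev μ φ hφneg hφo q t K ((∑ j, α j * q j) + t) b hK hb0 hble x hev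

private lemma exists_Xm (μ : Fin k → Measure (Pt d)) (φ : ℝ → ℝ) (q : Fin k → ℝ)
    (t s κ : ℝ) (X : Set (Pt d))
    (hpt : ∀ x ∈ X, ∀ᶠ r in 𝓝[>] (0 : ℝ),
      ENNReal.ofReal (Real.exp (s * Real.log r)) ≤
        ENNReal.ofReal (r ^ κ) * (ballWeight μ q x r * ENNReal.ofReal (Real.exp (t * φ r)))) :
    ∃ Xm : ℕ → Set (Pt d), X ⊆ (⋃ m, Xm m) ∧
      ∀ m, ∀ x ∈ Xm m, ∀ r : ℝ, 0 < r → r ≤ ((m : ℝ) + 1)⁻¹ →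
        ENNReal.ofReal (Real.exp (s * Real.log r)) ≤
          ENNReal.ofReal (r ^ κ) * (ballWeight μ q x r * ENNReal.ofReal (Real.exp (t * φ r))) := by
  refine ⟨fun m => {x | x ∈ X ∧ ∀ r : ℝ, 0 < r → r ≤ ((m : ℝ) + 1)⁻¹ →
    ENNReal.ofReal (Real.exp (s * Real.log r)) ≤
      ENNReal.ofReal (r ^ κ) * (ballWeight μ q x r * ENNReal.ofReal (Real.exp (t * φ r)))},
    ?_, ?_⟩
  · intro x hx
    obtain ⟨u, hu, hIoo⟩ := mem_nhdsGT_iff_exists_Ioo_subset.mp (hpt x hx)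
    obtain ⟨m, hm⟩ := exists_nat_one_div_lt (show (0:ℝ) < u from hu)
    refine mem_iUnion.mpr ⟨m, hx, fun r hr hrle => hIoo ⟨hr, lt_of_le_of_lt hrle ?_⟩⟩
    simpa [one_div] using hm
  · intro m x hx
    exact hx.2

end AuxStmt15d
/-- comparison of the centered Hausdorff and packing measures of the level
sets `X̄^α(φ)`, `X̲_α(φ)` with the mixed measures `H^{q,t}_{μ,φ}` and `P^{q,t}_{μ,φ}`. -/
theorem stmt_15 (d k : ℕ) (hd : 1 ≤ d) (hk : 1 ≤ k)
    (μ : Fin k → Measure (Pt d)) (hμ : ∀ j, IsProbabilityMeasure (μ j))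
    (φ : ℝ → ℝ) (hφmono : MonotoneOn φ (Ioi (0 : ℝ)))
    (hφneg : ∃ r₀ > (0 : ℝ), ∀ r : ℝ, 0 < r → r < r₀ → φ r < 0)
    (hφo : (fun r : ℝ => φ r) =o[𝓝[>] (0 : ℝ)] Real.log) :
    (∀ δ : ℝ, 0 < δ → ∀ t : ℝ, ∀ q : Fin k → ℝ, (∀ i, 0 ≤ q i) → ∀ α : Fin k → ℝ,
      0 ≤ (∑ j, α j * q j) + t →
      ∃ C : ℝ≥0∞, 0 < C ∧ C ≠ ⊤ ∧
        cHaus μ ((∑ j, α j * q j) + t + k * δ) (XUpper μ φ α) ≤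
          C * mixedH μ φ q t (XUpper μ φ α) ∧
        cPack μ ((∑ j, α j * q j) + t + k * δ) (XUpper μ φ α) ≤
          C * mixedP μ φ q t (XUpper μ φ α)) ∧
    (∀ δ : ℝ, 0 < δ → ∀ t : ℝ, ∀ q : Fin k → ℝ, (∀ i, q i ≤ 0) → ∀ α : Fin k → ℝ,
      0 ≤ (∑ j, α j * q j) + t →
      ∃ C : ℝ≥0∞, 0 < C ∧ C ≠ ⊤ ∧
        cHaus μ ((∑ j, α j * q j) + t + k * δ) (XLower μ φ α) ≤
          C * mixedH μ φ q t (XLower μ φ α) ∧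
        cPack μ ((∑ j, α j * q j) + t + k * δ) (XLower μ φ α) ≤
          C * mixedP μ φ q t (XLower μ φ α)) := by
  have hk1 : (1 : ℝ) ≤ (k : ℝ) := by exact_mod_cast hk
  constructor
  · intro δ hδ t q hq α hA
    have hK : 0 < (k : ℝ) * δ := by nlinarith
    have hκ : 0 < 3 * ((k : ℝ) * δ) / 4 := by positivity
    obtain ⟨Xm, hcov, hXmP⟩ := exists_Xm μ φ q t ((∑ j, α j * q j) + t + (k : ℝ) * δ)
      (3 * ((k : ℝ) * δ) / 4) (XUpper μ φ α)
      (fun x hx => hpt_upper μ hμ φ hφneg hφo q hq α t ((k : ℝ) * δ) hK hA x hx)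
    refine ⟨1, zero_lt_one, ENNReal.one_ne_top, ?_, ?_⟩
    · rw [one_mul]
      by_cases hfin : mixedH μ φ q t (XUpper μ φ α) = ⊤
      · rw [hfin]; exact le_top
      · have h0 : cHaus μ ((∑ j, α j * q j) + t + (k : ℝ) * δ) (XUpper μ φ α) = 0 :=
          keyH μ φ q t _ _ hκ _ Xm hcov hXmP hfin
        rw [h0]; exact zero_le
    · rw [one_mul]
      by_cases hfin : mixedP μ φ q t (XUpper μ φ α) = ⊤
      · rw [hfin]; exact le_top
      · have h0 : cPack μ ((∑ j, α j * q j) + t + (k : ℝ) * δ) (XUpper μ φ α) = 0 :=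
          keyP μ φ q t _ _ hκ _ Xm hcov hXmP hfin
        rw [h0]; exact zero_le
  · intro δ hδ t q hq α hA
    have hK : 0 < (k : ℝ) * δ := by nlinarith
    have hκ : 0 < 3 * ((k : ℝ) * δ) / 4 := by positivity
    obtain ⟨Xm, hcov, hXmP⟩ := exists_Xm μ φ q t ((∑ j, α j * q j) + t + (k : ℝ) * δ)
      (3 * ((k : ℝ) * δ) / 4) (XLower μ φ α)
      (fun x hx => hpt_lower μ hμ φ hφneg hφo q hq α t ((k : ℝ) * δ) hK hA x hx)
    refine ⟨1, zero_lt_one, ENNReal.one_ne_top, ?_, ?_⟩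
    · rw [one_mul]
      by_cases hfin : mixedH μ φ q t (XLower μ φ α) = ⊤
      · rw [hfin]; exact le_top
      · have h0 : cHaus μ ((∑ j, α j * q j) + t + (k : ℝ) * δ) (XLower μ φ α) = 0 :=
          keyH μ φ q t _ _ hκ _ Xm hcov hXmP hfin
        rw [h0]; exact zero_le
    · rw [one_mul]
      by_cases hfin : mixedP μ φ q t (XLower μ φ α) = ⊤
      · rw [hfin]; exact le_top
      · have h0 : cPack μ ((∑ j, α j * q j) + t + (k : ℝ) * δ) (XLower μ φ α) = 0 :=
          keyP μ φ q t _ _ hκ _ Xm hcov hXmP hfin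
        rw [h0]; exact zero_le

end
end

section
/- Assume in addition that φ(r) = o(log r) as r → 0, and write b_{μ,φ}(q) := b_{μ,φ}(q, supp(μ)), B_{μ,φ}(q) := B_{μ,φ}(q, supp(μ)). Let α ∈ ℝ_+^k and q ∈ ℝ^k. (a) If ⟨α,q⟩ + b_{μ,φ}(q) ≥ 0, then dim X̄^α(φ) ≤ ⟨α,q⟩ + b_{μ,φ}(q) for every q with all coordinates ≥ 0, and dim X̲_α(φ) ≤ ⟨α,q⟩ + b_{μ,φ}(q) for every q with all coordinates ≤ 0. (b) If ⟨α,q⟩ + B_{μ,φ}(q) ≥ 0, then Dim X̄^α(φ) ≤ ⟨α,q⟩ + B_{μ,φ}(q) for every q with all coordinates ≥ 0, and Dim X̲_α(φ) ≤ ⟨α,q⟩ + B_{μ,φ}(q) for every q with all coordinates ≤ 0. Here dim and Dim denote the Hausdorff and packing dimensions. -/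
open MeasureTheory Metric Filter Set Asymptotics
open scoped ENNReal Topology

noncomputable section

variable {d k : ℕ}

/-! ### Auxiliary lemmas for Statement 16 -/

lemma ennreal_rpow_le_rpow_of_nonpos {x y : ℝ≥0∞} (hxy : x ≤ y) {z : ℝ} (hz : z ≤ 0) :
    y ^ z ≤ x ^ z := by
  rw [← neg_neg z, ENNReal.rpow_neg x, ENNReal.rpow_neg y]
  exact ENNReal.inv_le_inv.2 (ENNReal.rpow_le_rpow hxy (neg_nonneg.2 hz))

lemma ballWeight_zero_eq_one (μ : Fin k → Measure (Pt d)) (x : Pt d) (r : ℝ) :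
    ballWeight μ (fun _ => 0) x r = 1 := by
  simp [ballWeight]

lemma ballWeight_ge_of_nonneg (μ : Fin k → Measure (Pt d)) (φ : ℝ → ℝ) (q c : Fin k → ℝ)
    (hq : ∀ j, 0 ≤ q j) (x : Pt d) (r : ℝ)
    (h : ∀ j, ENNReal.ofReal (Real.exp (c j * φ r)) ≤ μ j (closedBall x r)) :
    ENNReal.ofReal (Real.exp ((∑ j, q j * c j) * φ r)) ≤ ballWeight μ q x r := by
  have hsum : (∑ j, q j * c j) * φ r = ∑ j, (c j * φ r) * q j := by
    rw [Finset.sum_mul]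
    exact Finset.sum_congr rfl fun j _ => by ring
  calc ENNReal.ofReal (Real.exp ((∑ j, q j * c j) * φ r))
      = ∏ j, ENNReal.ofReal (Real.exp ((c j * φ r) * q j)) := by
        rw [← ENNReal.ofReal_prod_of_nonneg (fun j _ => (Real.exp_pos _).le), ← Real.exp_sum,
          hsum]
    _ = ∏ j, (ENNReal.ofReal (Real.exp (c j * φ r))) ^ q j := by
        refine Finset.prod_congr rfl fun j _ => ?_
        rw [ENNReal.ofReal_rpow_of_pos (Real.exp_pos _), ← Real.exp_mul]
    _ ≤ ∏ j, μ j (closedBall x r) ^ q j :=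
        Finset.prod_le_prod' fun j _ => ENNReal.rpow_le_rpow (h j) (hq j)

lemma ballWeight_ge_of_nonpos (μ : Fin k → Measure (Pt d)) (φ : ℝ → ℝ) (q c : Fin k → ℝ)
    (hq : ∀ j, q j ≤ 0) (x : Pt d) (r : ℝ)
    (h : ∀ j, μ j (closedBall x r) ≤ ENNReal.ofReal (Real.exp (c j * φ r))) :
    ENNReal.ofReal (Real.exp ((∑ j, q j * c j) * φ r)) ≤ ballWeight μ q x r := by
  have hsum : (∑ j, q j * c j) * φ r = ∑ j, (c j * φ r) * q j := by
    rw [Finset.sum_mul]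
    exact Finset.sum_congr rfl fun j _ => by ring
  calc ENNReal.ofReal (Real.exp ((∑ j, q j * c j) * φ r))
      = ∏ j, ENNReal.ofReal (Real.exp ((c j * φ r) * q j)) := by
        rw [← ENNReal.ofReal_prod_of_nonneg (fun j _ => (Real.exp_pos _).le), ← Real.exp_sum,
          hsum]
    _ = ∏ j, (ENNReal.ofReal (Real.exp (c j * φ r))) ^ q j := by
        refine Finset.prod_congr rfl fun j _ => ?_
        rw [ENNReal.ofReal_rpow_of_pos (Real.exp_pos _), ← Real.exp_mul]
    _ ≤ ∏ j, μ j (closedBall x r) ^ q j :=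
        Finset.prod_le_prod' fun j _ => ennreal_rpow_le_rpow_of_nonpos (h j) (hq j)

lemma aux_eventually (φ : ℝ → ℝ) (hφo : (fun r : ℝ => φ r) =o[𝓝[>] (0 : ℝ)] Real.log)
    {t : ℝ} (ht : 0 < t) (c : ℝ) :
    ∀ᶠ r in 𝓝[>] (0 : ℝ), t * Real.log r ≤ c * φ r := by
  have hc1 : (0 : ℝ) < |c| + 1 := by positivity
  have hb := hφo.def (div_pos ht hc1)
  have h01 : Ioo (0 : ℝ) 1 ∈ 𝓝[>] (0 : ℝ) := Ioo_mem_nhdsGT_of_mem ⟨le_rfl, zero_lt_one⟩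
  filter_upwards [hb, h01] with r hbr hr01
  have hlog : Real.log r < 0 := Real.log_neg hr01.1 hr01.2
  rw [Real.norm_eq_abs, Real.norm_eq_abs] at hbr
  have h1 : -(|c| * |φ r|) ≤ c * φ r := by
    have := neg_abs_le (c * φ r); rwa [abs_mul] at this
  have h2 : |c| * |φ r| ≤ |c| * (t / (|c| + 1) * |Real.log r|) :=
    mul_le_mul_of_nonneg_left hbr (abs_nonneg c)
  have h3 : |c| * (t / (|c| + 1) * |Real.log r|) ≤ t * |Real.log r| := by
    rw [← mul_assoc]
    refine mul_le_mul_of_nonneg_right ?_ (abs_nonneg _)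
    rw [mul_div_assoc', div_le_iff₀ hc1]
    nlinarith [abs_nonneg c, ht.le]
  have habs : |Real.log r| = -Real.log r := abs_of_neg hlog
  nlinarith [h2.trans h3]

lemma eventually_to_Ioo {P : ℝ → Prop} (h : ∀ᶠ r in 𝓝[>] (0 : ℝ), P r) :
    ∃ u > (0 : ℝ), ∀ r, 0 < r → r < u → P r := by
  rw [eventually_iff, mem_nhdsGT_iff_exists_Ioo_subset] at h
  obtain ⟨u, hu, hsub⟩ := h
  exact ⟨u, hu, fun r h1 h2 => hsub ⟨h1, h2⟩⟩

lemma famSum_compare (μ : Fin k → Measure (Pt d)) (φ : ℝ → ℝ) (q : Fin k → ℝ)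
    {s' c₀ t ε₁ : ℝ} (hε₁pos : 0 < ε₁)
    (hε₁ : ∀ r, 0 < r → r < ε₁ → t * Real.log r ≤ (c₀ + s') * φ r)
    {m : ℕ} {G : Set (Pt d)}
    (hG : ∀ x ∈ G, ∀ r : ℝ, 0 < r → r ≤ 1 / ((m : ℝ) + 1) →
      ENNReal.ofReal (Real.exp (c₀ * φ r)) ≤ ballWeight μ q x r)
    {S : Set (Pt d × ℝ)} {ε : ℝ} (hεle : ε ≤ min (ε₁ / 2) (1 / ((m : ℝ) + 1)))
    (hS : ∀ p ∈ S, p.1 ∈ G ∧ 0 < p.2 ∧ p.2 ≤ ε) :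
    famSum μ Real.log (fun _ => 0) t S ≤ famSum μ φ q s' S := by
  refine Summable.tsum_le_tsum (fun p => ?_) ENNReal.summable ENNReal.summable
  obtain ⟨hx, hr, hrle⟩ := hS p.1 p.2
  have hr1 : p.1.2 < ε₁ := by
    have h := hrle.trans (hεle.trans (min_le_left _ _))
    linarith
  have hr2 : p.1.2 ≤ 1 / ((m : ℝ) + 1) := hrle.trans (hεle.trans (min_le_right _ _))
  rw [ballWeight_zero_eq_one, one_mul]
  calc ENNReal.ofReal (Real.exp (t * Real.log p.1.2))
      ≤ ENNReal.ofReal (Real.exp ((c₀ + s') * φ p.1.2)) :=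
        ENNReal.ofReal_le_ofReal (Real.exp_le_exp.2 (hε₁ _ hr hr1))
    _ = ENNReal.ofReal (Real.exp (c₀ * φ p.1.2)) * ENNReal.ofReal (Real.exp (s' * φ p.1.2)) := by
        rw [← ENNReal.ofReal_mul (Real.exp_pos _).le, ← Real.exp_add]
        ring_nf
    _ ≤ ballWeight μ q p.1.1 p.1.2 * ENNReal.ofReal (Real.exp (s' * φ p.1.2)) :=
        mul_le_mul_left (hG p.1.1 hx p.1.2 hr hr2) _

set_option maxHeartbeats 1000000 in
lemma engine_H (μ : Fin k → Measure (Pt d)) (φ : ℝ → ℝ) (q : Fin k → ℝ)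
    (hφo : (fun r : ℝ => φ r) =o[𝓝[>] (0 : ℝ)] Real.log)
    {s' c₀ : ℝ} (hs' : mixedH μ φ q s' (mSupp μ) = 0)
    {X : Set (Pt d)} {F : ℕ → Set (Pt d)}
    (hX : X ⊆ ⋃ m, F m) (hFsupp : ∀ m, F m ⊆ mSupp μ)
    (hF : ∀ m, ∀ x ∈ F m, ∀ r : ℝ, 0 < r → r ≤ 1 / ((m : ℝ) + 1) →
        ENNReal.ofReal (Real.exp (c₀ * φ r)) ≤ ballWeight μ q x r)
    {t : ℝ} (ht : 0 < t) :
    mixedH μ Real.log (fun _ => 0) t X = 0 := by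
  obtain ⟨ε₁, hε₁pos, hε₁⟩ := eventually_to_Ioo (aux_eventually φ hφo ht (c₀ + s'))
  have hmin : ∀ m : ℕ, (0 : ℝ) < min (ε₁ / 2) (1 / ((m : ℝ) + 1)) := by
    intro m
    refine lt_min (by linarith) (by positivity)
  -- every subset of `F m` has vanishing `preH` at small radius
  have key : ∀ (m : ℕ) (G : Set (Pt d)), G ⊆ F m → ∀ ε : ℝ, 0 < ε →
      ε ≤ min (ε₁ / 2) (1 / ((m : ℝ) + 1)) → preH μ Real.log (fun _ => 0) t ε G = 0 := by
    intro m G hGF ε hε hεle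
    have h1 : preH μ Real.log (fun _ => 0) t ε G ≤ preH μ φ q s' ε G := by
      refine le_iInf fun S => le_iInf fun hS => ?_
      refine le_trans (iInf₂_le S hS) ?_
      exact famSum_compare μ φ q hε₁pos hε₁ (fun x hx => hF m x (hGF hx)) hεle hS.2.1
    have h2 : preH μ φ q s' ε G ≤ mixedHbar μ φ q s' G := by
      exact le_iSup₂ (f := fun (ε : ℝ) (_ : 0 < ε) => preH μ φ q s' ε G) ε hε
    have h3 : mixedHbar μ φ q s' G ≤ mixedH μ φ q s' (mSupp μ) :=
      le_iSup₂ (f := fun (F' : Set (Pt d)) (_ : F' ⊆ mSupp μ) => mixedHbar μ φ q s' F') G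
        (hGF.trans (hFsupp m))
    exact le_antisymm ((((h1.trans h2).trans h3)).trans_eq hs') (zero_le)
  -- every subset of `X` has vanishing `preH` at every radius
  have key2 : ∀ G ⊆ X, ∀ ε : ℝ, 0 < ε → preH μ Real.log (fun _ => 0) t ε G = 0 := by
    intro G hGX ε hε
    by_contra hne
    have hpos : 0 < preH μ Real.log (fun _ => 0) t ε G := zero_lt_iff.2 hne
    obtain ⟨u, hu, husum⟩ := ENNReal.exists_pos_sum_of_countable hpos.ne' ℕ
    set εm : ℕ → ℝ := fun m => min ε (min (ε₁ / 2) (1 / ((m : ℝ) + 1))) with hεm_def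
    have hεm : ∀ m, 0 < εm m := fun m => lt_min hε (hmin m)
    have h0 : ∀ m : ℕ, preH μ Real.log (fun _ => 0) t (εm m) (G ∩ F m) = 0 := fun m =>
      key m _ inter_subset_right (εm m) (hεm m) (min_le_right _ _)
    have hEX : ∀ m : ℕ, ∃ S, IsCenteredCover (G ∩ F m) (εm m) S ∧
        famSum μ Real.log (fun _ => 0) t S < u m := by
      intro m
      have hlt : preH μ Real.log (fun _ => 0) t (εm m) (G ∩ F m) < (u m : ℝ≥0∞) := by
        rw [h0 m]; exact ENNReal.coe_pos.2 (hu m)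
      rw [preH, iInf_lt_iff] at hlt
      obtain ⟨S, hS⟩ := hlt
      rw [iInf_lt_iff] at hS
      obtain ⟨hcov, hlt'⟩ := hS
      exact ⟨S, hcov, hlt'⟩
    choose S hScov hSsum using hEX
    have hcov : IsCenteredCover G ε (⋃ m, S m) := by
      refine ⟨countable_iUnion fun m => (hScov m).1, ?_, ?_⟩
      · intro p hp
        obtain ⟨m, hm⟩ := mem_iUnion.1 hp
        obtain ⟨h1, h2, h3⟩ := (hScov m).2.1 p hm
        exact ⟨h1.1, h2, h3.trans (min_le_left _ _)⟩
      · intro x hx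
        obtain ⟨m, hm⟩ := mem_iUnion.1 (hX (hGX hx))
        have : x ∈ G ∩ F m := ⟨hx, hm⟩
        obtain ⟨p, hp, hxp⟩ := mem_iUnion₂.1 ((hScov m).2.2 this)
        exact mem_iUnion₂.2 ⟨p, mem_iUnion.2 ⟨m, hp⟩, hxp⟩
    have hle1 : preH μ Real.log (fun _ => 0) t ε G ≤
        famSum μ Real.log (fun _ => 0) t (⋃ m, S m) := iInf₂_le _ hcov
    have hle2 : famSum μ Real.log (fun _ => 0) t (⋃ m, S m) ≤
        ∑' m, famSum μ Real.log (fun _ => 0) t (S m) := by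
      unfold famSum
      exact ENNReal.tsum_iUnion_le_tsum
        (fun p : Pt d × ℝ => ballWeight μ (fun _ => 0) p.1 p.2 *
          ENNReal.ofReal (Real.exp (t * Real.log p.2))) S
    have hle3 : ∑' m, famSum μ Real.log (fun _ => 0) t (S m) ≤ ∑' m, (u m : ℝ≥0∞) :=
      Summable.tsum_le_tsum (fun m => (hSsum m).le) ENNReal.summable ENNReal.summable
    exact absurd (((hle1.trans hle2).trans hle3).trans_lt husum) (lt_irrefl _)
  refine le_antisymm ?_ (zero_le)
  refine iSup₂_le fun G hG => iSup₂_le fun ε hε => le_of_eq (key2 G hG ε hε)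

lemma preP_mono_set (μ : Fin k → Measure (Pt d)) (φ : ℝ → ℝ) (q : Fin k → ℝ) (t ε : ℝ)
    {A B : Set (Pt d)} (h : A ⊆ B) : preP μ φ q t ε A ≤ preP μ φ q t ε B :=
  iSup₂_le fun S hS => le_iSup₂ (f := fun (S : Set (Pt d × ℝ)) (_ : IsCenteredPacking B ε S) =>
    famSum μ φ q t S) S ⟨hS.1, fun p hp => ⟨h (hS.2.1 p hp).1, (hS.2.1 p hp).2⟩, hS.2.2⟩

lemma preP_mono_radius (μ : Fin k → Measure (Pt d)) (φ : ℝ → ℝ) (q : Fin k → ℝ) (t : ℝ)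
    {ε ε' : ℝ} (h : ε ≤ ε') (E : Set (Pt d)) : preP μ φ q t ε E ≤ preP μ φ q t ε' E :=
  iSup₂_le fun S hS => le_iSup₂ (f := fun (S : Set (Pt d × ℝ)) (_ : IsCenteredPacking E ε' S) =>
    famSum μ φ q t S) S
    ⟨hS.1, fun p hp => ⟨(hS.2.1 p hp).1, (hS.2.1 p hp).2.1, (hS.2.1 p hp).2.2.trans h⟩, hS.2.2⟩

lemma mixedPbar_mono (μ : Fin k → Measure (Pt d)) (φ : ℝ → ℝ) (q : Fin k → ℝ) (t : ℝ)
    {A B : Set (Pt d)} (h : A ⊆ B) : mixedPbar μ φ q t A ≤ mixedPbar μ φ q t B :=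
  le_iInf fun ε => le_iInf fun hε =>
    (iInf₂_le (f := fun (ε : ℝ) (_ : 0 < ε) => preP μ φ q t ε A) ε hε).trans
      (preP_mono_set μ φ q t ε h)

set_option maxHeartbeats 1000000 in
lemma engine_P (μ : Fin k → Measure (Pt d)) (φ : ℝ → ℝ) (q : Fin k → ℝ)
    (hφo : (fun r : ℝ => φ r) =o[𝓝[>] (0 : ℝ)] Real.log)
    {s' c₀ : ℝ} (hs' : mixedP μ φ q s' (mSupp μ) = 0)
    {X : Set (Pt d)} {F : ℕ → Set (Pt d)}
    (hX : X ⊆ ⋃ m, F m) (hFsupp : ∀ m, F m ⊆ mSupp μ)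
    (hF : ∀ m, ∀ x ∈ F m, ∀ r : ℝ, 0 < r → r ≤ 1 / ((m : ℝ) + 1) →
        ENNReal.ofReal (Real.exp (c₀ * φ r)) ≤ ballWeight μ q x r)
    {t : ℝ} (ht : 0 < t) :
    mixedP μ Real.log (fun _ => 0) t X = 0 := by
  obtain ⟨ε₁, hε₁pos, hε₁⟩ := eventually_to_Ioo (aux_eventually φ hφo ht (c₀ + s'))
  have hmin : ∀ m : ℕ, (0 : ℝ) < min (ε₁ / 2) (1 / ((m : ℝ) + 1)) := by
    intro m
    refine lt_min (by linarith) (by positivity)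
  have claim : ∀ (m : ℕ) (B : Set (Pt d)), B ⊆ F m →
      mixedPbar μ Real.log (fun _ => 0) t B ≤ mixedPbar μ φ q s' B := by
    intro m B hBF
    refine le_iInf fun ε => le_iInf fun hε => ?_
    set ε' := min ε (min (ε₁ / 2) (1 / ((m : ℝ) + 1))) with hε'def
    have hε' : 0 < ε' := lt_min hε (hmin m)
    calc mixedPbar μ Real.log (fun _ => 0) t B
        ≤ preP μ Real.log (fun _ => 0) t ε' B :=
          iInf₂_le (f := fun (ε : ℝ) (_ : 0 < ε) => preP μ Real.log (fun _ => 0) t ε B) ε' hε'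
      _ ≤ preP μ φ q s' ε' B := by
          refine iSup₂_le fun S hS => ?_
          refine le_trans (famSum_compare μ φ q hε₁pos hε₁
            (fun x hx => hF m x (hBF hx)) (min_le_right _ _) hS.2.1) ?_
          exact le_iSup₂ (f := fun (S : Set (Pt d × ℝ)) (_ : IsCenteredPacking B ε' S) =>
            famSum μ φ q s' S) S hS
      _ ≤ preP μ φ q s' ε B := preP_mono_radius μ φ q s' (min_le_left _ _) B
  by_contra hne
  have hpos : 0 < mixedP μ Real.log (fun _ => 0) t X := zero_lt_iff.2 hne
  obtain ⟨u, hu, husum⟩ := ENNReal.exists_pos_sum_of_countable hpos.ne' ℕ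
  have hA : ∀ m : ℕ, ∃ A : ℕ → Set (Pt d), (mSupp μ ⊆ ⋃ n, A n) ∧
      ∑' n, mixedPbar μ φ q s' (A n) < u m := by
    intro m
    have hlt : mixedP μ φ q s' (mSupp μ) < (u m : ℝ≥0∞) := by
      rw [hs']; exact ENNReal.coe_pos.2 (hu m)
    rw [mixedP, iInf_lt_iff] at hlt
    obtain ⟨A, hA⟩ := hlt
    rw [iInf_lt_iff] at hA
    obtain ⟨h1, h2⟩ := hA
    exact ⟨A, h1, h2⟩
  choose A hAcov hAsum using hA
  set e : ℕ ≃ ℕ × ℕ := (Denumerable.eqv (ℕ × ℕ)).symm with he_def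
  set C : ℕ → Set (Pt d) := fun i => F (e i).1 ∩ A (e i).1 (e i).2 with hC_def
  have hCcov : X ⊆ ⋃ i, C i := by
    intro x hx
    obtain ⟨m, hm⟩ := mem_iUnion.1 (hX hx)
    obtain ⟨n, hn⟩ := mem_iUnion.1 (hAcov m (hFsupp m hm))
    refine mem_iUnion.2 ⟨e.symm (m, n), ?_⟩
    have : e (e.symm (m, n)) = (m, n) := e.apply_symm_apply _
    simp only [hC_def, this]
    exact ⟨hm, hn⟩
  have hle1 : mixedP μ Real.log (fun _ => 0) t X ≤
      ∑' i, mixedPbar μ Real.log (fun _ => 0) t (C i) :=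
    iInf₂_le (f := fun (A : ℕ → Set (Pt d)) (_ : X ⊆ ⋃ n, A n) =>
      ∑' n, mixedPbar μ Real.log (fun _ => 0) t (A n)) C hCcov
  have hle2 : ∑' i, mixedPbar μ Real.log (fun _ => 0) t (C i) =
      ∑' p : ℕ × ℕ, mixedPbar μ Real.log (fun _ => 0) t (F p.1 ∩ A p.1 p.2) :=
    Equiv.tsum_eq e (fun p => mixedPbar μ Real.log (fun _ => 0) t (F p.1 ∩ A p.1 p.2))
  have hle3 : ∑' p : ℕ × ℕ, mixedPbar μ Real.log (fun _ => 0) t (F p.1 ∩ A p.1 p.2) ≤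
      ∑' m, (u m : ℝ≥0∞) := by
    rw [ENNReal.tsum_prod (f := fun m n => mixedPbar μ Real.log (fun _ => 0) t (F m ∩ A m n))]
    refine Summable.tsum_le_tsum (fun m => ?_) ENNReal.summable ENNReal.summable
    refine le_trans (Summable.tsum_le_tsum (fun n => ?_) ENNReal.summable ENNReal.summable) (hAsum m).le
    exact (claim m _ inter_subset_left).trans (mixedPbar_mono μ φ q s' inter_subset_right)
  exact absurd ((hle1.trans_eq hle2).trans_lt (hle3.trans_lt husum)) (lt_irrefl _)

lemma dec_upper (μ : Fin k → Measure (Pt d)) (hμ : ∀ j, IsProbabilityMeasure (μ j))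
    (φ : ℝ → ℝ) (hφneg : ∃ r₀ > (0 : ℝ), ∀ r : ℝ, 0 < r → r < r₀ → φ r < 0)
    (α q : Fin k → ℝ) (hq : ∀ i, 0 ≤ q i) :
    ∃ F : ℕ → Set (Pt d), XUpper μ φ α ⊆ ⋃ m, F m ∧ (∀ m, F m ⊆ mSupp μ) ∧
      ∀ m, ∀ x ∈ F m, ∀ r : ℝ, 0 < r → r ≤ 1 / ((m : ℝ) + 1) →
        ENNReal.ofReal (Real.exp ((∑ j, q j * (α j + 1)) * φ r)) ≤ ballWeight μ q x r := by
  obtain ⟨r₀, hr₀, hneg⟩ := hφneg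
  refine ⟨fun m => {x | x ∈ XUpper μ φ α ∧ ∀ r : ℝ, 0 < r → r ≤ 1 / ((m : ℝ) + 1) →
      ∀ j, ENNReal.ofReal (Real.exp ((α j + 1) * φ r)) ≤ μ j (closedBall x r)}, ?_, ?_, ?_⟩
  · intro x hx
    have hev : ∀ᶠ r in 𝓝[>] (0 : ℝ), ∀ j,
        ENNReal.ofReal (Real.exp ((α j + 1) * φ r)) ≤ μ j (closedBall x r) := by
      rw [eventually_all]
      intro j
      have hcoe : ((α j : ℝ) : EReal) < (((α j + 1 : ℝ)) : EReal) :=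
        EReal.coe_lt_coe_iff.2 (lt_add_one _)
      have h1 := eventually_lt_of_limsup_lt (lt_of_le_of_lt (hx.2 j) hcoe)
      have h2 : Ioo (0 : ℝ) r₀ ∈ 𝓝[>] (0 : ℝ) := Ioo_mem_nhdsGT_of_mem ⟨le_rfl, hr₀⟩
      filter_upwards [h1, h2] with r hr hrIoo
      have hφr : φ r < 0 := hneg r hrIoo.1 hrIoo.2
      have hbμ : 0 < μ j (closedBall x r) :=
        lt_of_lt_of_le ((mem_iInter.1 hx.1 j) r hrIoo.1) (measure_mono ball_subset_closedBall)
      haveI := hμ j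
      have hne : μ j (closedBall x r) ≠ ⊤ := measure_ne_top _ _
      have hm0 : 0 < (μ j (closedBall x r)).toReal := ENNReal.toReal_pos hbμ.ne' hne
      have hratio : locRatio (μ j) φ x r < α j + 1 := EReal.coe_lt_coe_iff.1 hr
      rw [locRatio, div_lt_iff_of_neg hφr] at hratio
      have hexp : Real.exp ((α j + 1) * φ r) < (μ j (closedBall x r)).toReal := by
        calc Real.exp ((α j + 1) * φ r)
            < Real.exp (Real.log ((μ j (closedBall x r)).toReal)) := Real.exp_lt_exp.2 hratio
          _ = (μ j (closedBall x r)).toReal := Real.exp_log hm0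
      calc ENNReal.ofReal (Real.exp ((α j + 1) * φ r))
          ≤ ENNReal.ofReal ((μ j (closedBall x r)).toReal) := ENNReal.ofReal_le_ofReal hexp.le
        _ = μ j (closedBall x r) := ENNReal.ofReal_toReal hne
    obtain ⟨u, hu, hsub⟩ := eventually_to_Ioo hev
    obtain ⟨m, hm⟩ := exists_nat_one_div_lt hu
    exact mem_iUnion.2 ⟨m, hx, fun r h1 h2 j => hsub r h1 (lt_of_le_of_lt h2 hm) j⟩
  · exact fun m x hx => hx.1.1
  · intro m x hx r h1 h2
    exact ballWeight_ge_of_nonneg μ φ q (fun j => α j + 1) hq x r (fun j => hx.2 r h1 h2 j)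

lemma dec_lower (μ : Fin k → Measure (Pt d)) (hμ : ∀ j, IsProbabilityMeasure (μ j))
    (φ : ℝ → ℝ) (hφneg : ∃ r₀ > (0 : ℝ), ∀ r : ℝ, 0 < r → r < r₀ → φ r < 0)
    (α q : Fin k → ℝ) (hq : ∀ i, q i ≤ 0) :
    ∃ F : ℕ → Set (Pt d), XLower μ φ α ⊆ ⋃ m, F m ∧ (∀ m, F m ⊆ mSupp μ) ∧
      ∀ m, ∀ x ∈ F m, ∀ r : ℝ, 0 < r → r ≤ 1 / ((m : ℝ) + 1) →
        ENNReal.ofReal (Real.exp ((∑ j, q j * (α j - 1)) * φ r)) ≤ ballWeight μ q x r := by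
  obtain ⟨r₀, hr₀, hneg⟩ := hφneg
  refine ⟨fun m => {x | x ∈ XLower μ φ α ∧ ∀ r : ℝ, 0 < r → r ≤ 1 / ((m : ℝ) + 1) →
      ∀ j, μ j (closedBall x r) ≤ ENNReal.ofReal (Real.exp ((α j - 1) * φ r))}, ?_, ?_, ?_⟩
  · intro x hx
    have hev : ∀ᶠ r in 𝓝[>] (0 : ℝ), ∀ j,
        μ j (closedBall x r) ≤ ENNReal.ofReal (Real.exp ((α j - 1) * φ r)) := by
      rw [eventually_all]
      intro j
      have hcoe : (((α j - 1 : ℝ)) : EReal) < ((α j : ℝ) : EReal) :=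
        EReal.coe_lt_coe_iff.2 (sub_one_lt _)
      have h1 := eventually_lt_of_lt_liminf (lt_of_lt_of_le hcoe (hx.2 j))
      have h2 : Ioo (0 : ℝ) r₀ ∈ 𝓝[>] (0 : ℝ) := Ioo_mem_nhdsGT_of_mem ⟨le_rfl, hr₀⟩
      filter_upwards [h1, h2] with r hr hrIoo
      have hφr : φ r < 0 := hneg r hrIoo.1 hrIoo.2
      have hbμ : 0 < μ j (closedBall x r) :=
        lt_of_lt_of_le ((mem_iInter.1 hx.1 j) r hrIoo.1) (measure_mono ball_subset_closedBall)
      haveI := hμ j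
      have hne : μ j (closedBall x r) ≠ ⊤ := measure_ne_top _ _
      have hm0 : 0 < (μ j (closedBall x r)).toReal := ENNReal.toReal_pos hbμ.ne' hne
      have hratio : α j - 1 < locRatio (μ j) φ x r := EReal.coe_lt_coe_iff.1 hr
      rw [locRatio, lt_div_iff_of_neg hφr] at hratio
      have hexp : (μ j (closedBall x r)).toReal < Real.exp ((α j - 1) * φ r) := by
        calc (μ j (closedBall x r)).toReal
            = Real.exp (Real.log ((μ j (closedBall x r)).toReal)) := (Real.exp_log hm0).symm
          _ < Real.exp ((α j - 1) * φ r) := Real.exp_lt_exp.2 hratio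
      calc μ j (closedBall x r)
          = ENNReal.ofReal ((μ j (closedBall x r)).toReal) := (ENNReal.ofReal_toReal hne).symm
        _ ≤ ENNReal.ofReal (Real.exp ((α j - 1) * φ r)) := ENNReal.ofReal_le_ofReal hexp.le
    obtain ⟨u, hu, hsub⟩ := eventually_to_Ioo hev
    obtain ⟨m, hm⟩ := exists_nat_one_div_lt hu
    exact mem_iUnion.2 ⟨m, hx, fun r h1 h2 j => hsub r h1 (lt_of_le_of_lt h2 hm) j⟩
  · exact fun m x hx => hx.1.1
  · intro m x hx r h1 h2
    exact ballWeight_ge_of_nonpos μ φ q (fun j => α j - 1) hq x r (fun j => hx.2 r h1 h2 j)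

lemma wrapH (μ : Fin k → Measure (Pt d)) (φ : ℝ → ℝ)
    (hφo : (fun r : ℝ => φ r) =o[𝓝[>] (0 : ℝ)] Real.log)
    (q : Fin k → ℝ) (c c₀ : ℝ) (X : Set (Pt d)) (F : ℕ → Set (Pt d))
    (hX : X ⊆ ⋃ m, F m) (hFsupp : ∀ m, F m ⊆ mSupp μ)
    (hF : ∀ m, ∀ x ∈ F m, ∀ r : ℝ, 0 < r → r ≤ 1 / ((m : ℝ) + 1) →
      ENNReal.ofReal (Real.exp (c₀ * φ r)) ≤ ballWeight μ q x r)
    (h0 : 0 ≤ (c : EReal) + bDim μ φ q (mSupp μ)) :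
    hDim μ X ≤ (c : EReal) + bDim μ φ q (mSupp μ) := by
  by_cases hZ : {t : ℝ | mixedH μ φ q t (mSupp μ) = 0}.Nonempty
  · obtain ⟨s', hs'⟩ := hZ
    have hzero : ∀ t : ℝ, 0 < t → mixedH μ Real.log (fun _ => 0) t X = 0 :=
      fun t ht => engine_H μ φ q hφo (s' := s') (c₀ := c₀) hs' hX hFsupp hF ht
    refine le_trans ?_ h0
    by_contra h
    push_neg at h
    obtain ⟨x, hx0, hxlt⟩ := EReal.exists_between_coe_real h
    have hxpos : (0 : ℝ) < x := by exact_mod_cast hx0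
    have hle : hDim μ X ≤ (x : EReal) := sInf_le ⟨x, hzero x hxpos, rfl⟩
    exact absurd (hle.trans_lt hxlt) (lt_irrefl _)
  · have h1 : bDim μ φ q (mSupp μ) = ⊤ := by
      rw [bDim, not_nonempty_iff_eq_empty.1 hZ, image_empty, sInf_empty]
    rw [h1, EReal.coe_add_top]
    exact le_top

lemma wrapP (μ : Fin k → Measure (Pt d)) (φ : ℝ → ℝ)
    (hφo : (fun r : ℝ => φ r) =o[𝓝[>] (0 : ℝ)] Real.log)
    (q : Fin k → ℝ) (c c₀ : ℝ) (X : Set (Pt d)) (F : ℕ → Set (Pt d))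
    (hX : X ⊆ ⋃ m, F m) (hFsupp : ∀ m, F m ⊆ mSupp μ)
    (hF : ∀ m, ∀ x ∈ F m, ∀ r : ℝ, 0 < r → r ≤ 1 / ((m : ℝ) + 1) →
      ENNReal.ofReal (Real.exp (c₀ * φ r)) ≤ ballWeight μ q x r)
    (h0 : 0 ≤ (c : EReal) + BDim μ φ q (mSupp μ)) :
    pDim μ X ≤ (c : EReal) + BDim μ φ q (mSupp μ) := by
  by_cases hZ : {t : ℝ | mixedP μ φ q t (mSupp μ) = 0}.Nonempty
  · obtain ⟨s', hs'⟩ := hZ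
    have hzero : ∀ t : ℝ, 0 < t → mixedP μ Real.log (fun _ => 0) t X = 0 :=
      fun t ht => engine_P μ φ q hφo (s' := s') (c₀ := c₀) hs' hX hFsupp hF ht
    refine le_trans ?_ h0
    by_contra h
    push_neg at h
    obtain ⟨x, hx0, hxlt⟩ := EReal.exists_between_coe_real h
    have hxpos : (0 : ℝ) < x := by exact_mod_cast hx0
    have hle : pDim μ X ≤ (x : EReal) := sInf_le ⟨x, hzero x hxpos, rfl⟩
    exact absurd (hle.trans_lt hxlt) (lt_irrefl _)
  · have h1 : BDim μ φ q (mSupp μ) = ⊤ := by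
      rw [BDim, not_nonempty_iff_eq_empty.1 hZ, image_empty, sInf_empty]
    rw [h1, EReal.coe_add_top]
    exact le_top

/-- upper bounds for the Hausdorff and packing dimensions of the level sets
`X̄^α(φ)` and `X̲_α(φ)`. -/
theorem stmt_16 (d k : ℕ) (hd : 1 ≤ d) (hk : 1 ≤ k)
    (μ : Fin k → Measure (Pt d)) (hμ : ∀ j, IsProbabilityMeasure (μ j))
    (φ : ℝ → ℝ) (hφmono : MonotoneOn φ (Ioi (0 : ℝ)))
    (hφneg : ∃ r₀ > (0 : ℝ), ∀ r : ℝ, 0 < r → r < r₀ → φ r < 0)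
    (hφo : (fun r : ℝ => φ r) =o[𝓝[>] (0 : ℝ)] Real.log)
    (α : Fin k → ℝ) (hα : ∀ i, 0 ≤ α i) :
    (∀ q : Fin k → ℝ, (∀ i, 0 ≤ q i) →
      0 ≤ ((∑ j, α j * q j : ℝ) : EReal) + bDim μ φ q (mSupp μ) →
      hDim μ (XUpper μ φ α) ≤ ((∑ j, α j * q j : ℝ) : EReal) + bDim μ φ q (mSupp μ)) ∧
    (∀ q : Fin k → ℝ, (∀ i, q i ≤ 0) →
      0 ≤ ((∑ j, α j * q j : ℝ) : EReal) + bDim μ φ q (mSupp μ) →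
      hDim μ (XLower μ φ α) ≤ ((∑ j, α j * q j : ℝ) : EReal) + bDim μ φ q (mSupp μ)) ∧
    (∀ q : Fin k → ℝ, (∀ i, 0 ≤ q i) →
      0 ≤ ((∑ j, α j * q j : ℝ) : EReal) + BDim μ φ q (mSupp μ) →
      pDim μ (XUpper μ φ α) ≤ ((∑ j, α j * q j : ℝ) : EReal) + BDim μ φ q (mSupp μ)) ∧
    (∀ q : Fin k → ℝ, (∀ i, q i ≤ 0) →
      0 ≤ ((∑ j, α j * q j : ℝ) : EReal) + BDim μ φ q (mSupp μ) →
      pDim μ (XLower μ φ α) ≤ ((∑ j, α j * q j : ℝ) : EReal) + BDim μ φ q (mSupp μ)) := by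
  refine ⟨?_, ?_, ?_, ?_⟩
  · intro q hq h0
    obtain ⟨F, hX, hFsupp, hF⟩ := dec_upper μ hμ φ hφneg α q hq
    exact wrapH μ φ hφo q _ _ _ F hX hFsupp hF h0
  · intro q hq h0
    obtain ⟨F, hX, hFsupp, hF⟩ := dec_lower μ hμ φ hφneg α q hq
    exact wrapH μ φ hφo q _ _ _ F hX hFsupp hF h0
  · intro q hq h0
    obtain ⟨F, hX, hFsupp, hF⟩ := dec_upper μ hμ φ hφneg α q hq
    exact wrapP μ φ hφo q _ _ _ F hX hFsupp hF h0
  · intro q hq h0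
    obtain ⟨F, hX, hFsupp, hF⟩ := dec_lower μ hμ φ hφneg α q hq
    exact wrapP μ φ hφo q _ _ _ F hX hFsupp hF h0

end
end

section
/- Write b_{μ,φ}(q) := b_{μ,φ}(q, supp(μ)) and B_{μ,φ}(q) := B_{μ,φ}(q, supp(μ)), and let α ∈ ℝ_+^k. (1) If q ∈ ℝ^k has all coordinates ≤ 0 and ⟨α,q⟩ + b_{μ,φ}(q) < 0 or ⟨α,q⟩ + B_{μ,φ}(q) < 0, then X̲_α(φ) = ∅. (2) If q ∈ ℝ^k has all coordinates ≥ 0 and ⟨α,q⟩ + b_{μ,φ}(q) < 0 or ⟨α,q⟩ + B_{μ,φ}(q) < 0, then X̄^α(φ) = ∅. In particular, in either case X(α,φ) := X̲_α(φ) ∩ X̄^α(φ) = ∅. -/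
open MeasureTheory Metric Filter Set Asymptotics
open scoped ENNReal Topology

noncomputable section

variable {d k : ℕ}

section Helpers

variable {d k : ℕ}

set_option maxHeartbeats 1000000 in
private lemma key_pos (μ : Fin k → Measure (Pt d)) (φ : ℝ → ℝ) (q : Fin k → ℝ) (t : ℝ)
    (x : Pt d) (hx : x ∈ mSupp μ) (r₁ : ℝ) (hr₁ : 0 < r₁)
    (h : ∀ r : ℝ, 0 < r → r ≤ r₁ →
      (1 : ℝ≥0∞) ≤ ballWeight μ q x r * ENNReal.ofReal (Real.exp (t * φ r))) :
    mixedH μ φ q t (mSupp μ) ≠ 0 ∧ mixedP μ φ q t (mSupp μ) ≠ 0 := by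
  have hH : (1 : ℝ≥0∞) ≤ mixedH μ φ q t (mSupp μ) := by
    unfold mixedH
    refine le_trans ?_
      (le_iSup₂ (f := fun (F : Set (Pt d)) (_ : F ⊆ mSupp μ) => mixedHbar μ φ q t F)
        ({x} : Set (Pt d)) (singleton_subset_iff.2 hx))
    unfold mixedHbar
    refine le_trans ?_
      (le_iSup₂ (f := fun (ε : ℝ) (_ : 0 < ε) => preH μ φ q t ε ({x} : Set (Pt d))) r₁ hr₁)
    unfold preH
    refine le_iInf₂ fun S hS => ?_
    obtain ⟨-, hprop, hcov⟩ := hS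
    obtain ⟨p, hpS, hxp⟩ := mem_iUnion₂.1 (hcov (mem_singleton x))
    obtain ⟨hp1, hp2, hp3⟩ := hprop p hpS
    have hp1' : p.1 = x := hp1
    unfold famSum
    refine le_trans ?_ (ENNReal.le_tsum (⟨p, hpS⟩ : S))
    rw [hp1']
    exact h p.2 hp2 hp3
  have hP : (1 : ℝ≥0∞) ≤ mixedP μ φ q t (mSupp μ) := by
    unfold mixedP
    refine le_iInf₂ fun A hA => ?_
    obtain ⟨n, hn⟩ := mem_iUnion.1 (hA hx)
    refine le_trans ?_ (ENNReal.le_tsum n)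
    unfold mixedPbar
    refine le_iInf₂ fun ε hε => ?_
    have hr0 : 0 < min ε r₁ := lt_min hε hr₁
    have hpack : IsCenteredPacking (A n) ε ({(x, min ε r₁)} : Set (Pt d × ℝ)) := by
      refine ⟨countable_singleton _, ?_, Set.pairwise_singleton _ _⟩
      rintro p rfl
      exact ⟨hn, hr0, min_le_left _ _⟩
    unfold preP
    refine le_trans ?_
      (le_iSup₂ (f := fun (S : Set (Pt d × ℝ)) (_ : IsCenteredPacking (A n) ε S) =>
        famSum μ φ q t S) _ hpack)
    unfold famSum
    rw [tsum_singleton (x, min ε r₁)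
      (fun p : Pt d × ℝ => ballWeight μ q p.1 p.2 * ENNReal.ofReal (Real.exp (t * φ p.2)))]
    exact h (min ε r₁) hr0 (min_le_right _ _)
  exact ⟨fun h0 => by simp [h0] at hH, fun h0 => by simp [h0] at hP⟩

private lemma dim_geH (μ : Fin k → Measure (Pt d)) (φ : ℝ → ℝ) (q : Fin k → ℝ) (T : ℝ)
    (h : ∀ t : ℝ, t < T → mixedH μ φ q t (mSupp μ) ≠ 0) :
    (T : EReal) ≤ bDim μ φ q (mSupp μ) := by
  refine le_sInf ?_
  rintro b ⟨t, ht, rfl⟩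
  by_contra hlt
  push_neg at hlt
  exact h t (by exact_mod_cast hlt) ht

private lemma dim_geB (μ : Fin k → Measure (Pt d)) (φ : ℝ → ℝ) (q : Fin k → ℝ) (T : ℝ)
    (h : ∀ t : ℝ, t < T → mixedP μ φ q t (mSupp μ) ≠ 0) :
    (T : EReal) ≤ BDim μ φ q (mSupp μ) := by
  refine le_sInf ?_
  rintro b ⟨t, ht, rfl⟩
  by_contra hlt
  push_neg at hlt
  exact h t (by exact_mod_cast hlt) ht

private lemma weight_ge_one (μ : Fin k → Measure (Pt d)) (hμ : ∀ j, IsProbabilityMeasure (μ j))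
    (φ : ℝ → ℝ) (q : Fin k → ℝ) (t : ℝ) (x : Pt d) (r : ℝ)
    (hsupp : ∀ j, (0 : ℝ≥0∞) < μ j (closedBall x r))
    (hE : 0 ≤ ∑ j, Real.log ((μ j (closedBall x r)).toReal) * q j + t * φ r) :
    (1 : ℝ≥0∞) ≤ ballWeight μ q x r * ENNReal.ofReal (Real.exp (t * φ r)) := by
  have hfin : ∀ j, μ j (closedBall x r) ≠ ⊤ := by
    intro j
    haveI := hμ j
    exact measure_ne_top (μ j) _
  set m : Fin k → ℝ := fun j => (μ j (closedBall x r)).toReal with hm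
  have hm0 : ∀ j, 0 < m j := fun j => ENNReal.toReal_pos (hsupp j).ne' (hfin j)
  have hbw : ballWeight μ q x r = ENNReal.ofReal (Real.exp (∑ j, Real.log (m j) * q j)) := by
    unfold ballWeight
    calc ∏ j, μ j (closedBall x r) ^ q j
        = ∏ j, ENNReal.ofReal ((m j) ^ (q j)) := by
          refine Finset.prod_congr rfl fun j _ => ?_
          rw [← ENNReal.ofReal_rpow_of_pos (hm0 j), ENNReal.ofReal_toReal (hfin j)]
      _ = ENNReal.ofReal (∏ j, (m j) ^ (q j)) :=
          (ENNReal.ofReal_prod_of_nonneg fun j _ => (Real.rpow_pos_of_pos (hm0 j) _).le).symm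
      _ = ENNReal.ofReal (Real.exp (∑ j, Real.log (m j) * q j)) := by
          rw [Real.exp_sum]
          exact congrArg _ (Finset.prod_congr rfl fun j _ => Real.rpow_def_of_pos (hm0 j) _)
  rw [hbw, ← ENNReal.ofReal_mul (Real.exp_nonneg _), ← Real.exp_add]
  exact ENNReal.one_le_ofReal.2 (Real.one_le_exp hE)

private lemma eventual_bound (μ : Fin k → Measure (Pt d)) (hμ : ∀ j, IsProbabilityMeasure (μ j))
    (φ : ℝ → ℝ) (hφneg : ∃ r₀ > (0 : ℝ), ∀ r : ℝ, 0 < r → r < r₀ → φ r < 0)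
    (α q : Fin k → ℝ) (t : ℝ) (ht : (∑ j, α j * q j) + t < 0) (x : Pt d)
    (hx : x ∈ mSupp μ)
    (hloc : ∀ ε : ℝ, 0 < ε → ∀ j, ∀ᶠ r in 𝓝[>] (0 : ℝ), φ r < 0 →
      ∃ β : ℝ, |β - α j| ≤ ε ∧
        (β * φ r) * q j ≤ Real.log ((μ j (closedBall x r)).toReal) * q j) :
    ∀ᶠ r in 𝓝[>] (0 : ℝ),
      (1 : ℝ≥0∞) ≤ ballWeight μ q x r * ENNReal.ofReal (Real.exp (t * φ r)) := by
  set s := ∑ j, α j * q j with hs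
  set Q := ∑ j, |q j| with hQdef
  have hQ0 : 0 ≤ Q := Finset.sum_nonneg fun j _ => abs_nonneg _
  set ε := (-(s + t)) / (2 * (Q + 1)) with hεdef
  have hQ1 : (0:ℝ) < 2 * (Q + 1) := by linarith
  have hεpos : 0 < ε := div_pos (by linarith) hQ1
  have hεQ : ε * (2 * (Q + 1)) = -(s + t) := div_mul_cancel₀ _ hQ1.ne'
  have hc : s + ε * Q + t < 0 := by nlinarith
  obtain ⟨r₀, hr₀, hφ'⟩ := hφneg
  have hφev : ∀ᶠ r in 𝓝[>] (0 : ℝ), φ r < 0 := by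
    filter_upwards [Ioo_mem_nhdsGT_of_mem (Set.left_mem_Ico.2 hr₀)] with r hr
    exact hφ' r hr.1 hr.2
  have hall : ∀ᶠ r in 𝓝[>] (0 : ℝ), ∀ j, φ r < 0 →
      ∃ β : ℝ, |β - α j| ≤ ε ∧
        (β * φ r) * q j ≤ Real.log ((μ j (closedBall x r)).toReal) * q j :=
    eventually_all.2 (hloc ε hεpos)
  filter_upwards [hall, hφev, self_mem_nhdsWithin] with r hr hφr hrpos
  have hrpos' : (0:ℝ) < r := hrpos
  have hsupp : ∀ j, (0 : ℝ≥0∞) < μ j (closedBall x r) := fun j =>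
    lt_of_lt_of_le ((mem_iInter.1 hx j) r hrpos') (measure_mono ball_subset_closedBall)
  refine weight_ge_one μ hμ φ q t x r hsupp ?_
  have hterm : ∀ j, (α j * q j + ε * |q j|) * φ r ≤
      Real.log ((μ j (closedBall x r)).toReal) * q j := by
    intro j
    obtain ⟨β, hβ, hβ2⟩ := hr j hφr
    refine le_trans ?_ hβ2
    have h1 : (β - α j) * q j ≤ ε * |q j| :=
      calc (β - α j) * q j ≤ |(β - α j) * q j| := le_abs_self _
        _ = |β - α j| * |q j| := abs_mul _ _
        _ ≤ ε * |q j| := mul_le_mul_of_nonneg_right hβ (abs_nonneg _)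
    nlinarith [mul_le_mul_of_nonpos_right h1 hφr.le]
  have hsum := Finset.sum_le_sum fun j (_ : j ∈ Finset.univ) => hterm j
  have heq : ∑ j, (α j * q j + ε * |q j|) * φ r = (s + ε * Q) * φ r := by
    rw [← Finset.sum_mul, Finset.sum_add_distrib, ← Finset.mul_sum]
  rw [heq] at hsum
  have h0 : 0 ≤ (s + ε * Q + t) * φ r := le_of_lt (mul_pos_of_neg_of_neg hc hφr)
  rw [add_mul] at h0
  linarith

end Helpers

/-- emptiness of the level sets when `⟨α,q⟩ + b_{μ,φ}(q) < 0` or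
`⟨α,q⟩ + B_{μ,φ}(q) < 0`. -/
theorem stmt_17 (d k : ℕ) (hd : 1 ≤ d) (hk : 1 ≤ k)
    (μ : Fin k → Measure (Pt d)) (hμ : ∀ j, IsProbabilityMeasure (μ j))
    (φ : ℝ → ℝ) (hφmono : MonotoneOn φ (Ioi (0 : ℝ)))
    (hφneg : ∃ r₀ > (0 : ℝ), ∀ r : ℝ, 0 < r → r < r₀ → φ r < 0)
    (α : Fin k → ℝ) (hα : ∀ i, 0 ≤ α i) :
    (∀ q : Fin k → ℝ, (∀ i, q i ≤ 0) →
      (((∑ j, α j * q j : ℝ) : EReal) + bDim μ φ q (mSupp μ) < 0 ∨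
        ((∑ j, α j * q j : ℝ) : EReal) + BDim μ φ q (mSupp μ) < 0) →
      XLower μ φ α = ∅) ∧
    (∀ q : Fin k → ℝ, (∀ i, 0 ≤ q i) →
      (((∑ j, α j * q j : ℝ) : EReal) + bDim μ φ q (mSupp μ) < 0 ∨
        ((∑ j, α j * q j : ℝ) : EReal) + BDim μ φ q (mSupp μ) < 0) →
      XUpper μ φ α = ∅) ∧
    (∀ q : Fin k → ℝ, ((∀ i, q i ≤ 0) ∨ (∀ i, 0 ≤ q i)) →
      (((∑ j, α j * q j : ℝ) : EReal) + bDim μ φ q (mSupp μ) < 0 ∨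
        ((∑ j, α j * q j : ℝ) : EReal) + BDim μ φ q (mSupp μ) < 0) →
      XLower μ φ α ∩ XUpper μ φ α = ∅) := by
  have hzero : ∀ s : ℝ, ((s : ℝ) : EReal) + ((-s : ℝ) : EReal) = 0 := by
    intro s
    rw [← EReal.coe_add]
    norm_num
  have contra : ∀ q : Fin k → ℝ,
      (∀ t : ℝ, t < -(∑ j, α j * q j) →
        mixedH μ φ q t (mSupp μ) ≠ 0 ∧ mixedP μ φ q t (mSupp μ) ≠ 0) →
      ¬ (((∑ j, α j * q j : ℝ) : EReal) + bDim μ φ q (mSupp μ) < 0 ∨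
        ((∑ j, α j * q j : ℝ) : EReal) + BDim μ φ q (mSupp μ) < 0) := by
    intro q key hlt
    have hb := dim_geH μ φ q (-(∑ j, α j * q j)) (fun t ht => (key t ht).1)
    have hB := dim_geB μ φ q (-(∑ j, α j * q j)) (fun t ht => (key t ht).2)
    rcases hlt with h | h
    · refine absurd h (not_lt.2 ?_)
      calc (0 : EReal) = ((∑ j, α j * q j : ℝ) : EReal) + ((-(∑ j, α j * q j) : ℝ) : EReal) :=
            (hzero _).symm
        _ ≤ _ := add_le_add le_rfl hb
    · refine absurd h (not_lt.2 ?_)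
      calc (0 : EReal) = ((∑ j, α j * q j : ℝ) : EReal) + ((-(∑ j, α j * q j) : ℝ) : EReal) :=
            (hzero _).symm
        _ ≤ _ := add_le_add le_rfl hB
  have keyOf : ∀ q : Fin k → ℝ, ∀ x : Pt d, x ∈ mSupp μ →
      (∀ ε : ℝ, 0 < ε → ∀ j, ∀ᶠ r in 𝓝[>] (0 : ℝ), φ r < 0 →
        ∃ β : ℝ, |β - α j| ≤ ε ∧
          (β * φ r) * q j ≤ Real.log ((μ j (closedBall x r)).toReal) * q j) →
      ∀ t : ℝ, t < -(∑ j, α j * q j) →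
        mixedH μ φ q t (mSupp μ) ≠ 0 ∧ mixedP μ φ q t (mSupp μ) ≠ 0 := by
    intro q x hxs hloc t ht
    have hev := eventual_bound μ hμ φ hφneg α q t (by linarith) x hxs hloc
    obtain ⟨u, hu, hsub⟩ := mem_nhdsGT_iff_exists_Ioo_subset.1 hev
    exact key_pos μ φ q t x hxs (u / 2) (half_pos hu)
      (fun r hr hru => hsub ⟨hr, lt_of_le_of_lt hru (half_lt_self hu)⟩)
  have part1 : ∀ q : Fin k → ℝ, (∀ i, q i ≤ 0) →
      (((∑ j, α j * q j : ℝ) : EReal) + bDim μ φ q (mSupp μ) < 0 ∨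
        ((∑ j, α j * q j : ℝ) : EReal) + BDim μ φ q (mSupp μ) < 0) →
      XLower μ φ α = ∅ := by
    intro q hq hlt
    rw [Set.eq_empty_iff_forall_notMem]
    intro x hx
    refine contra q (keyOf q x hx.1 ?_) hlt
    intro ε hε j
    have h1 : ((α j - ε : ℝ) : EReal) <
        liminf (fun r : ℝ => ((locRatio (μ j) φ x r : ℝ) : EReal)) (𝓝[>] 0) :=
      lt_of_lt_of_le (by exact_mod_cast sub_lt_self (α j) hε) (hx.2 j)
    filter_upwards [Filter.eventually_lt_of_lt_liminf h1] with r hr hφr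
    refine ⟨α j - ε, le_of_eq (by rw [show α j - ε - α j = -ε by ring, abs_neg, abs_of_pos hε]), ?_⟩
    have hr' : α j - ε < locRatio (μ j) φ x r := by exact_mod_cast hr
    unfold locRatio at hr'
    have hlog : Real.log ((μ j (closedBall x r)).toReal) ≤ (α j - ε) * φ r :=
      le_of_lt ((lt_div_iff_of_neg hφr).1 hr')
    exact mul_le_mul_of_nonpos_right hlog (hq j)
  have part2 : ∀ q : Fin k → ℝ, (∀ i, 0 ≤ q i) →
      (((∑ j, α j * q j : ℝ) : EReal) + bDim μ φ q (mSupp μ) < 0 ∨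
        ((∑ j, α j * q j : ℝ) : EReal) + BDim μ φ q (mSupp μ) < 0) →
      XUpper μ φ α = ∅ := by
    intro q hq hlt
    rw [Set.eq_empty_iff_forall_notMem]
    intro x hx
    refine contra q (keyOf q x hx.1 ?_) hlt
    intro ε hε j
    have h1 : limsup (fun r : ℝ => ((locRatio (μ j) φ x r : ℝ) : EReal)) (𝓝[>] 0) <
        ((α j + ε : ℝ) : EReal) :=
      lt_of_le_of_lt (hx.2 j) (by exact_mod_cast lt_add_of_pos_right (α j) hε)
    filter_upwards [Filter.eventually_lt_of_limsup_lt h1] with r hr hφr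
    refine ⟨α j + ε, le_of_eq (by rw [show α j + ε - α j = ε by ring, abs_of_pos hε]), ?_⟩
    have hr' : locRatio (μ j) φ x r < α j + ε := by exact_mod_cast hr
    unfold locRatio at hr'
    have hlog : (α j + ε) * φ r ≤ Real.log ((μ j (closedBall x r)).toReal) :=
      le_of_lt ((div_lt_iff_of_neg hφr).1 hr')
    exact mul_le_mul_of_nonneg_right hlog (hq j)
  refine ⟨part1, part2, ?_⟩
  intro q hsgn hlt
  rcases hsgn with hq | hq
  · rw [part1 q hq hlt]
    exact Set.empty_inter _
  · rw [part2 q hq hlt]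
    exact Set.inter_empty _

end
end
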